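/- arXiv:2112.06316 — 10 statements merged into one kernel-verified Lean document; each statement's English description precedes it below -/
import Mathlib

section
/- Let k ∈ ℝ, n ∈ ℝ³, let y⁰, x, y ∈ ℝ³ with x ≠ y⁰ and x ≠ y, let h > 0, and set r = |x − y⁰|, s = h/r, and u_s = (x−y⁰)/r − s(y−y⁰)/h. Then the double-layer kernel admits the single-analytic-factor representation e^{ik|x−y|}·(1 − ik|x−y|)·⟨x−y, n⟩/(4π|x−y|³) = (e^{ikr}/(4πr)) · [ (1/r)·e^{ik(h/s)(|u_s|−1)}·⟨u_s,n⟩/|u_s|³ − ik·e^{ik(h/s)(|u_s|−1)}·⟨u_s,n⟩/|u_s|² ], i.e., it equals (e^{ikr}/(4πr))·W₄ with W₄ = (s/h)Ŵ₂ − ik·Ŵ₃. -/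
open Complex Real

theorem double_layer_kernel_single_factor_factorization
    (k : ℝ) (n : EuclideanSpace ℝ (Fin 3))
    (y0 x y : EuclideanSpace ℝ (Fin 3)) (hx0 : x ≠ y0) (hxy : x ≠ y)
    (h : ℝ) (hh : 0 < h) (r s : ℝ) (us : EuclideanSpace ℝ (Fin 3))
    (hr : r = ‖x - y0‖) (hs : s = h / r)
    (hus : us = (1 / r) • (x - y0) - (s / h) • (y - y0)) :
    Complex.exp (Complex.I * k * ‖x - y‖) * (1 - Complex.I * k * ‖x - y‖) *
        ((inner ℝ (x - y) n : ℝ) : ℂ) / (4 * Real.pi * (‖x - y‖ : ℂ) ^ 3) =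
      (Complex.exp (Complex.I * k * r) / (4 * Real.pi * (r : ℂ))) *
        ((1 / (r : ℂ)) * Complex.exp (Complex.I * k * (h / s) * ((‖us‖ : ℝ) - 1)) *
            ((inner ℝ us n : ℝ) : ℂ) / (‖us‖ : ℂ) ^ 3 -
          Complex.I * k * Complex.exp (Complex.I * k * (h / s) * ((‖us‖ : ℝ) - 1)) *
            ((inner ℝ us n : ℝ) : ℂ) / (‖us‖ : ℂ) ^ 2) := by
  have hr0 : 0 < r := by rw [hr]; exact norm_pos_iff.mpr (sub_ne_zero.mpr hx0)
  have hR0 : 0 < ‖x - y‖ := norm_pos_iff.mpr (sub_ne_zero.mpr hxy)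
  have hrne : r ≠ 0 := hr0.ne'
  have hhne : h ≠ 0 := hh.ne'
  have hsh : s / h = 1 / r := by rw [hs]; field_simp
  have hus' : us = (1 / r) • (x - y) := by
    rw [hus, hsh, ← smul_sub]; congr 1; abel
  have hhs : h / s = r := by rw [hs]; field_simp
  have hnorm : ‖us‖ = ‖x - y‖ / r := by
    rw [hus', norm_smul, Real.norm_eq_abs, abs_of_pos (by positivity : (0:ℝ) < 1 / r)]
    ring
  have hinner : (inner ℝ us n : ℝ) = (inner ℝ (x - y) n : ℝ) / r := by
    rw [hus', real_inner_smul_left]; ring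
  have hexp : Complex.exp (Complex.I * k * r * ((↑(‖x - y‖ / r) : ℂ) - 1)) =
      Complex.exp (Complex.I * k * ‖x - y‖) / Complex.exp (Complex.I * k * r) := by
    rw [← Complex.exp_sub]
    congr 1
    have : ((r : ℂ)) ≠ 0 := Complex.ofReal_ne_zero.mpr hrne
    push_cast
    field_simp
  have hhsC : (h : ℂ) / (s : ℂ) = (r : ℂ) := by
    rw [← Complex.ofReal_div, hhs]
  rw [hhsC, hnorm, hinner, hexp]
  have hpi : (Real.pi : ℂ) ≠ 0 := Complex.ofReal_ne_zero.mpr Real.pi_ne_zero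
  have hrc : (r : ℂ) ≠ 0 := Complex.ofReal_ne_zero.mpr hrne
  have hRc : ((‖x - y‖ : ℝ) : ℂ) ≠ 0 := Complex.ofReal_ne_zero.mpr hR0.ne'
  have hE : Complex.exp (Complex.I * k * r) ≠ 0 := Complex.exp_ne_zero _
  simp only [Complex.ofReal_div]
  generalize ((inner ℝ (x - y) n : ℝ) : ℂ) = P
  set A : ℂ := ((‖x - y‖ : ℝ) : ℂ) with hA
  set B : ℂ := ((r : ℝ) : ℂ) with hB
  set E1 : ℂ := Complex.exp (Complex.I * k * A) with hE1
  set E2 : ℂ := Complex.exp (Complex.I * k * B) with hE2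
  have hE1ne : E1 ≠ 0 := Complex.exp_ne_zero _
  field_simp
end

section
/- Let k ∈ ℝ, h > 0, and u, v ∈ ℝ³ with |u| = 1 and |v| ≤ 1. Then there exists a function W : ℝ → ℂ that is real-analytic on the open interval (−1,1), satisfies W(s) = e^{ik(h/s)(|u − s·v| − 1)}/|u − s·v| for every s ∈ (−1,1) with s ≠ 0, and satisfies W(0) = e^{−ikh⟨u,v⟩}. In particular, the analytic factor W₁ of the single-layer kernel extends analytically through s = 0 (corresponding to r = ∞). -/
open Complex Real Set

theorem W1_extends_analytically_through_zero
    (k h : ℝ) (hh : 0 < h) (u v : EuclideanSpace ℝ (Fin 3))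
    (hu : ‖u‖ = 1) (hv : ‖v‖ ≤ 1) :
    ∃ W : ℝ → ℂ, AnalyticOnNhd ℝ W (Set.Ioo (-1 : ℝ) 1) ∧
      (∀ s ∈ Set.Ioo (-1 : ℝ) 1, s ≠ 0 →
        W s = Complex.exp (Complex.I * k * (h / s) * ((‖u - s • v‖ : ℝ) - 1)) /
          (‖u - s • v‖ : ℂ)) ∧
      W 0 = Complex.exp (-(Complex.I * k * h * ((inner ℝ u v : ℝ) : ℂ))) := by
  set c : ℝ := (inner ℝ u v : ℝ) with hc
  set b : ℝ := ‖v‖ ^ 2 with hb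
  -- complex polynomial
  set Q : ℝ → ℂ := fun s => 1 - 2 * (s : ℂ) * (c : ℂ) + (s : ℂ) ^ 2 * (b : ℂ) with hQ
  -- square root factor
  set Φ : ℝ → ℂ := fun s => Complex.exp (Complex.log (Q s) / 2) with hΦ
  set W : ℝ → ℂ := fun s =>
    Complex.exp (Complex.I * (k : ℂ) * (h : ℂ) * ((s : ℂ) * (b : ℂ) - 2 * (c : ℂ)) / (Φ s + 1)) / Φ s
    with hW
  -- basic facts
  have hnorm : ∀ s ∈ Set.Ioo (-1 : ℝ) 1,
      ‖u - s • v‖ ^ 2 = 1 - 2 * s * c + s ^ 2 * b ∧ 0 < ‖u - s • v‖ := by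
    intro s hs
    constructor
    · rw [norm_sub_sq_real, real_inner_smul_right, norm_smul, hu]
      simp [mul_pow, sq_abs, hb, hc]; ring
    · have h1 : ‖s • v‖ < 1 := by
        rw [norm_smul]
        calc ‖s‖ * ‖v‖ ≤ ‖s‖ * 1 := by gcongr
          _ < 1 := by rw [mul_one, Real.norm_eq_abs, abs_lt]; exact ⟨hs.1, hs.2⟩
      have h2 := norm_sub_norm_le u (s • v)
      rw [hu] at h2
      linarith
  have hQval : ∀ s : ℝ, Q s = ((1 - 2 * s * c + s ^ 2 * b : ℝ) : ℂ) := by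
    intro s; rw [hQ]; push_cast; ring
  -- Φ s = ‖u - s•v‖ on the interval
  have hΦval : ∀ s ∈ Set.Ioo (-1 : ℝ) 1, Φ s = ((‖u - s • v‖ : ℝ) : ℂ) := by
    intro s hs
    obtain ⟨hq, hn⟩ := hnorm s hs
    rw [hΦ]
    simp only
    rw [hQval s, ← hq]
    rw [← Complex.ofReal_log (by positivity)]
    rw [Real.log_pow]
    push_cast
    rw [show ((2 : ℂ) * Real.log ‖u - s • v‖) / 2 = (Real.log ‖u - s • v‖ : ℂ) by ring]
    rw [← Complex.ofReal_exp, Real.exp_log hn]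
  -- analyticity
  have hQana : ∀ s : ℝ, AnalyticAt ℝ Q s := by
    intro s
    apply AnalyticAt.add
    apply AnalyticAt.sub
    · exact analyticAt_const
    · exact (analyticAt_const.mul (Complex.ofRealCLM.analyticAt s)).mul analyticAt_const
    · exact ((Complex.ofRealCLM.analyticAt s).pow 2).mul analyticAt_const
  have hΦana : ∀ s ∈ Set.Ioo (-1 : ℝ) 1, AnalyticAt ℝ Φ s := by
    intro s hs
    obtain ⟨hq, hn⟩ := hnorm s hs
    have hmem : Q s ∈ Complex.slitPlane := by
      rw [hQval s, ← hq]
      exact Complex.ofReal_mem_slitPlane.2 (by positivity)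
    have hlog : AnalyticAt ℝ (fun t => Complex.log (Q t)) s :=
      (analyticAt_clog hmem).restrictScalars.comp (hQana s)
    exact analyticAt_cexp.restrictScalars.comp (hlog.div analyticAt_const (by norm_num))
  have hΦne : ∀ s ∈ Set.Ioo (-1 : ℝ) 1, Φ s ≠ 0 ∧ Φ s + 1 ≠ 0 := by
    intro s hs
    obtain ⟨hq, hn⟩ := hnorm s hs
    rw [hΦval s hs]
    constructor
    · exact_mod_cast hn.ne'
    · rw [show ((‖u - s • v‖ : ℝ) : ℂ) + 1 = ((‖u - s • v‖ + 1 : ℝ) : ℂ) by push_cast; ring]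
      exact_mod_cast (by positivity : (0:ℝ) < ‖u - s • v‖ + 1).ne'
  refine ⟨W, ?_, ?_, ?_⟩
  · intro s hs
    obtain ⟨hne, hne1⟩ := hΦne s hs
    have hnum : AnalyticAt ℝ (fun t : ℝ => Complex.exp
        (Complex.I * (k : ℂ) * (h : ℂ) * ((t : ℂ) * (b : ℂ) - 2 * (c : ℂ)) / (Φ t + 1))) s := by
      have hexpo : AnalyticAt ℝ
          (fun t : ℝ => Complex.I * (k : ℂ) * (h : ℂ) * ((t : ℂ) * (b : ℂ) - 2 * (c : ℂ)) / (Φ t + 1)) s := by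
        apply AnalyticAt.div
        · exact analyticAt_const.mul (((Complex.ofRealCLM.analyticAt s).mul
            analyticAt_const).sub analyticAt_const)
        · exact (hΦana s hs).add analyticAt_const
        · exact hne1
      exact analyticAt_cexp.restrictScalars.comp hexpo
    exact hnum.div (hΦana s hs) hne
  · intro s hs hs0
    obtain ⟨hq, hn⟩ := hnorm s hs
    obtain ⟨hne, hne1⟩ := hΦne s hs
    rw [hW]
    simp only
    rw [hΦval s hs]
    congr 1
    congr 1
    have hΦsq : ((‖u - s • v‖ : ℝ) : ℂ) ^ 2 = 1 - 2 * (s:ℂ) * (c:ℂ) + (s:ℂ) ^ 2 * (b:ℂ) := by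
      rw [← Complex.ofReal_pow, hq]; push_cast; ring
    rw [hΦval s hs] at hne1
    have hs0' : (s : ℂ) ≠ 0 := Complex.ofReal_ne_zero.2 hs0
    have hinv : (s : ℂ) * (s : ℂ)⁻¹ = 1 := mul_inv_cancel₀ hs0'
    rw [div_eq_iff hne1]
    linear_combination (-(Complex.I * (k:ℂ) * (h:ℂ) * (s:ℂ)⁻¹)) * hΦsq
      + (-(Complex.I * (k:ℂ) * (h:ℂ) * ((s:ℂ) * (b:ℂ) - 2 * (c:ℂ)))) * hinv
  · have h0 : (0 : ℝ) ∈ Set.Ioo (-1 : ℝ) 1 := by norm_num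
    rw [hW]
    simp only
    have hQ0 : Q 0 = 1 := by rw [hQval]; norm_num
    have hΦ0 : Φ 0 = 1 := by rw [hΦ]; simp [hQ0]
    rw [hΦ0]
    push_cast
    rw [show Complex.I * (k:ℂ) * (h:ℂ) * ((0:ℂ) * (b:ℂ) - 2 * (c:ℂ)) / (1 + 1)
        = -(Complex.I * (k:ℂ) * (h:ℂ) * (c:ℂ)) by ring]
    simp
end

section
/- Let k ∈ ℝ, h > 0, n ∈ ℝ³, and u, v ∈ ℝ³ with |u| = 1 and |v| ≤ 1. Then there exists a function W : ℝ → ℂ that is real-analytic on the open interval (−1,1), satisfies W(s) = e^{ik(h/s)(|u − s·v| − 1)}·⟨u − s·v, n⟩/|u − s·v|³ for every s ∈ (−1,1) with s ≠ 0, and satisfies W(0) = e^{−ikh⟨u,v⟩}·⟨u, n⟩. In particular, the analytic factor W₂ of the double-layer kernel extends analytically through s = 0 (corresponding to r = ∞). -/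
open Complex Real Set

theorem W2_extends_analytically_through_zero
    (k h : ℝ) (hh : 0 < h) (n u v : EuclideanSpace ℝ (Fin 3))
    (hu : ‖u‖ = 1) (hv : ‖v‖ ≤ 1) :
    ∃ W : ℝ → ℂ, AnalyticOnNhd ℝ W (Set.Ioo (-1 : ℝ) 1) ∧
      (∀ s ∈ Set.Ioo (-1 : ℝ) 1, s ≠ 0 →
        W s = Complex.exp (Complex.I * k * (h / s) * ((‖u - s • v‖ : ℝ) - 1)) *
          ((inner ℝ (u - s • v) n : ℝ) : ℂ) / (‖u - s • v‖ : ℂ) ^ 3) ∧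
      W 0 = Complex.exp (-(Complex.I * k * h * ((inner ℝ u v : ℝ) : ℂ))) *
        ((inner ℝ u n : ℝ) : ℂ) := by
  set a : ℝ := inner ℝ u v with ha
  set b : ℝ := ‖v‖ ^ 2 with hb
  set cun : ℝ := inner ℝ u n with hcun
  set cvn : ℝ := inner ℝ v n with hcvn
  set Q : ℂ → ℂ := fun z => 1 - 2 * a * z + b * z ^ 2 with hQ
  set SQ : ℂ → ℂ := fun z => Q z ^ ((1 : ℂ) / 2) with hSQ
  set F : ℂ → ℂ := fun z =>
    Complex.exp (Complex.I * k * h * ((b * z - 2 * a) / (SQ z + 1))) *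
      ((cun : ℂ) - z * cvn) / (SQ z) ^ 3 with hF
  -- basic real facts
  have hq : ∀ s : ℝ, ‖u - s • v‖ ^ 2 = 1 - 2 * a * s + b * s ^ 2 := by
    intro s
    have := @norm_sub_sq_real (EuclideanSpace ℝ (Fin 3)) _ _ u (s • v)
    rw [this, real_inner_smul_right, norm_smul, hu]
    simp only [ha, hb, Real.norm_eq_abs, mul_pow, sq_abs, one_pow]
    skip
    ring
  have hnpos : ∀ s : ℝ, s ∈ Set.Ioo (-1 : ℝ) 1 → 0 < ‖u - s • v‖ := by
    intro s hs
    have h2 : |s| < 1 := abs_lt.2 ⟨hs.1, hs.2⟩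
    have h3 : ‖s • v‖ < 1 := by
      rw [norm_smul, Real.norm_eq_abs]
      calc |s| * ‖v‖ ≤ |s| * 1 := mul_le_mul_of_nonneg_left hv (abs_nonneg s)
        _ = |s| := mul_one _
        _ < 1 := h2
    have := norm_sub_norm_le u (s • v)
    rw [hu] at this
    linarith
  have hQval : ∀ s : ℝ, Q (s : ℂ) = ((‖u - s • v‖ ^ 2 : ℝ) : ℂ) := by
    intro s
    rw [hq s]
    simp only [hQ]
    push_cast
    ring
  have hSQval : ∀ s : ℝ, s ∈ Set.Ioo (-1 : ℝ) 1 →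
      SQ (s : ℂ) = ((‖u - s • v‖ : ℝ) : ℂ) := by
    intro s hs
    have h0 : (0 : ℝ) ≤ ‖u - s • v‖ ^ 2 := sq_nonneg _
    show Q (s : ℂ) ^ ((1 : ℂ) / 2) = _
    rw [hQval s, show ((1 : ℂ) / 2) = ((1 / 2 : ℝ) : ℂ) by push_cast; ring,
      ← Complex.ofReal_cpow h0]
    congr 1
    rw [← Real.sqrt_eq_rpow]
    exact Real.sqrt_sq (norm_nonneg _)
  -- complex analyticity of F at real points of Ioo
  have hFA : ∀ s : ℝ, s ∈ Set.Ioo (-1 : ℝ) 1 → AnalyticAt ℂ F (s : ℂ) := by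
    intro s hs
    have hNp : 0 < ‖u - s • v‖ := hnpos s hs
    have hQA : AnalyticAt ℂ Q (s : ℂ) := by
      apply AnalyticAt.add
      · exact analyticAt_const.sub (analyticAt_const.mul analyticAt_id)
      · exact analyticAt_const.mul (analyticAt_id.pow 2)
    have hslit : Q (s : ℂ) ∈ Complex.slitPlane := by
      rw [hQval s]
      refine Complex.mem_slitPlane_iff.2 (Or.inl ?_)
      rw [Complex.ofReal_re]
      exact pow_pos hNp 2
    have hSQA : AnalyticAt ℂ SQ (s : ℂ) := hQA.cpow analyticAt_const hslit
    have hSQpos : SQ (s : ℂ) = ((‖u - s • v‖ : ℝ) : ℂ) := hSQval s hs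
    have hden1 : SQ (s : ℂ) + 1 ≠ 0 := by
      rw [hSQpos, show ((‖u - s • v‖ : ℝ) : ℂ) + 1 = ((‖u - s • v‖ + 1 : ℝ) : ℂ) by
        push_cast; ring]
      exact_mod_cast (by linarith : (‖u - s • v‖ + 1 : ℝ) ≠ 0)
    have hden3 : (SQ (s : ℂ)) ^ 3 ≠ 0 := by
      rw [hSQpos]
      exact pow_ne_zero 3 (by exact_mod_cast hNp.ne')
    have hexpA : AnalyticAt ℂ
        (fun z => Complex.exp (Complex.I * k * h * ((b * z - 2 * a) / (SQ z + 1)))) (s : ℂ) := by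
      apply AnalyticAt.cexp
      apply AnalyticAt.mul analyticAt_const
      exact AnalyticAt.div (analyticAt_const.mul analyticAt_id |>.sub analyticAt_const)
        (hSQA.add analyticAt_const) hden1
    have hnumA : AnalyticAt ℂ (fun z => (cun : ℂ) - z * cvn) (s : ℂ) :=
      analyticAt_const.sub (analyticAt_id.mul analyticAt_const)
    exact ((hexpA.mul hnumA).div (hSQA.pow 3) hden3)
  refine ⟨fun s : ℝ => F (s : ℂ), ?_, ?_, ?_⟩
  · intro s hs
    exact ((hFA s hs).restrictScalars).comp (Complex.ofRealCLM.analyticAt s)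
  · intro s hs hs0
    have hNp : 0 < ‖u - s • v‖ := hnpos s hs
    set N : ℝ := ‖u - s • v‖ with hN
    have hSQpos : SQ (s : ℂ) = (N : ℂ) := hSQval s hs
    show F (s : ℂ) = _
    rw [hF]
    simp only [hSQpos]
    have hinner : (inner ℝ (u - s • v) n : ℝ) = cun - s * cvn := by
      rw [inner_sub_left, real_inner_smul_left, hcun, hcvn]
    have hexp : Complex.I * k * h * ((b * s - 2 * a) / ((N : ℂ) + 1)) =
        Complex.I * k * (h / s) * ((N : ℂ) - 1) := by
      have hkey : ((N : ℂ) - 1) * ((N : ℂ) + 1) = s * (b * s - 2 * a) := by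
        have : (N : ℝ) ^ 2 = 1 - 2 * a * s + b * s ^ 2 := hq s
        have : ((N : ℂ)) ^ 2 = 1 - 2 * a * s + b * s ^ 2 := by exact_mod_cast this
        ring_nf
        ring_nf at this
        linear_combination this
      have hden : ((N : ℂ) + 1) ≠ 0 := by
        rw [show ((N : ℝ) : ℂ) + 1 = ((N + 1 : ℝ) : ℂ) by push_cast; ring]
        exact_mod_cast (by linarith : (N + 1 : ℝ) ≠ 0)
      have hsne : (s : ℂ) ≠ 0 := by exact_mod_cast hs0
      field_simp
      linear_combination (-((k : ℂ) * h)) * hkey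
    rw [hexp, hinner]
    push_cast
    ring_nf
  · show F (0 : ℂ) = _
    rw [hF]
    have hQ0 : Q (0 : ℂ) = 1 := by simp [hQ]
    have hSQ0 : SQ (0 : ℂ) = 1 := by
      show Q (0 : ℂ) ^ ((1 : ℂ) / 2) = 1
      rw [hQ0, Complex.one_cpow]
    simp only [Complex.ofReal_zero] at hSQ0 ⊢
    rw [hSQ0]
    simp only [mul_zero, zero_mul, zero_sub, sub_zero, one_pow, div_one]
    congr 1
    ring
end

section
/- Let k ∈ ℝ, h > 0, n ∈ ℝ³, and u, v ∈ ℝ³ with |u| = 1 and |v| ≤ 1. Then there exists a function W : ℝ → ℂ that is real-analytic on the open interval (−1,1), satisfies W(s) = e^{ik(h/s)(|u − s·v| − 1)}·⟨u − s·v, n⟩/|u − s·v|² for every s ∈ (−1,1) with s ≠ 0, and satisfies W(0) = e^{−ikh⟨u,v⟩}·⟨u, n⟩. In particular, the analytic factor W₃ of the double-layer kernel extends analytically through s = 0 (corresponding to r = ∞). -/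
open Complex Real Set

lemma my_analyticAt_sqrt {x : ℝ} (hx : 0 < x) : AnalyticAt ℝ Real.sqrt x := by
  have h1 : AnalyticAt ℂ (fun z : ℂ => z ^ ((1/2 : ℝ) : ℂ)) (x : ℂ) :=
    (analyticAt_id).cpow analyticAt_const (Complex.ofReal_mem_slitPlane.mpr hx)
  have h2 : AnalyticAt ℝ (fun t : ℝ => ((t:ℂ) ^ ((1/2:ℝ):ℂ)).re) x :=
    (Complex.reCLM.analyticAt _).comp ((h1.restrictScalars).comp (Complex.ofRealCLM.analyticAt x))
  apply h2.congr
  filter_upwards [eventually_gt_nhds hx] with t ht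
  rw [← Complex.ofReal_cpow ht.le, Complex.ofReal_re]
  exact (Real.sqrt_eq_rpow t).symm

theorem W3_extends_analytically_through_zero
    (k h : ℝ) (hh : 0 < h) (n u v : EuclideanSpace ℝ (Fin 3))
    (hu : ‖u‖ = 1) (hv : ‖v‖ ≤ 1) :
    ∃ W : ℝ → ℂ, AnalyticOnNhd ℝ W (Set.Ioo (-1 : ℝ) 1) ∧
      (∀ s ∈ Set.Ioo (-1 : ℝ) 1, s ≠ 0 →
        W s = Complex.exp (Complex.I * k * (h / s) * ((‖u - s • v‖ : ℝ) - 1)) *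
          ((inner ℝ (u - s • v) n : ℝ) : ℂ) / (‖u - s • v‖ : ℂ) ^ 2) ∧
      W 0 = Complex.exp (-(Complex.I * k * h * ((inner ℝ u v : ℝ) : ℂ))) *
        ((inner ℝ u n : ℝ) : ℂ) := by
  set a : ℝ := inner ℝ u v with ha
  set b : ℝ := ‖v‖ ^ 2 with hb
  set c : ℝ := inner ℝ u n with hc
  set d : ℝ := inner ℝ v n with hd
  set q : ℝ → ℝ := fun s => 1 - 2 * a * s + b * s ^ 2 with hqdef
  have hq : ∀ s : ℝ, q s = ‖u - s • v‖ ^ 2 := by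
    intro s
    rw [@norm_sub_sq_real]
    simp only [hqdef, hu, real_inner_smul_right, norm_smul, Real.norm_eq_abs, mul_pow,
      _root_.sq_abs]
    ring
  have hqpos : ∀ s ∈ Set.Ioo (-1 : ℝ) 1, 0 < q s := by
    intro s hs
    have h2 : ‖s • v‖ ≤ |s| := by
      rw [norm_smul, Real.norm_eq_abs]
      calc |s| * ‖v‖ ≤ |s| * 1 := mul_le_mul_of_nonneg_left hv (abs_nonneg s)
        _ = |s| := by ring
    have h3 : |s| < 1 := abs_lt.mpr ⟨hs.1, hs.2⟩
    have h1 : 1 - |s| ≤ ‖u - s • v‖ := by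
      have := norm_sub_norm_le u (s • v)
      linarith [hu ▸ this]
    have h4 : 0 < ‖u - s • v‖ := by linarith
    rw [hq]
    positivity
  have hNq : ∀ s : ℝ, ‖u - s • v‖ = Real.sqrt (q s) := by
    intro s; rw [hq s, Real.sqrt_sq (norm_nonneg _)]
  set W : ℝ → ℂ := fun s =>
    Complex.exp (Complex.I * k * (((h * ((-2 * a + s * b) / (Real.sqrt (q s) + 1)) : ℝ)) : ℂ)) *
      ((c - s * d : ℝ) : ℂ) / ((q s : ℝ) : ℂ) with hW
  refine ⟨W, ?_, ?_, ?_⟩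
  · intro x hx
    have hqa : AnalyticAt ℝ q x := by
      apply AnalyticAt.add
      · exact analyticAt_const.sub ((analyticAt_const.mul analyticAt_id))
      · exact analyticAt_const.mul (analyticAt_id.pow 2)
    have hsq : AnalyticAt ℝ (fun s => Real.sqrt (q s)) x :=
      (my_analyticAt_sqrt (hqpos x hx)).comp hqa
    have hden : Real.sqrt (q x) + 1 ≠ 0 := by positivity
    have harg : AnalyticAt ℝ (fun s : ℝ => h * ((-2 * a + s * b) / (Real.sqrt (q s) + 1))) x :=
      analyticAt_const.mul
        ((analyticAt_const.add (analyticAt_id.mul analyticAt_const)).div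
          (hsq.add analyticAt_const) hden)
    have hargC : AnalyticAt ℝ
        (fun s : ℝ => Complex.I * k * ((h * ((-2 * a + s * b) / (Real.sqrt (q s) + 1)) : ℝ) : ℂ))
        x :=
      analyticAt_const.mul ((Complex.ofRealCLM.analyticAt _).comp harg)
    have hexp : AnalyticAt ℝ
        (fun s : ℝ => Complex.exp (Complex.I * k * ((h * ((-2 * a + s * b) / (Real.sqrt (q s) + 1)) : ℝ) : ℂ)))
        x := (analyticAt_cexp.restrictScalars).comp hargC
    have hnum : AnalyticAt ℝ (fun s : ℝ => ((c - s * d : ℝ) : ℂ)) x :=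
      (Complex.ofRealCLM.analyticAt _).comp (analyticAt_const.sub (analyticAt_id.mul analyticAt_const))
    have hqC : AnalyticAt ℝ (fun s : ℝ => ((q s : ℝ) : ℂ)) x :=
      (Complex.ofRealCLM.analyticAt _).comp hqa
    have hqx : ((q x : ℝ) : ℂ) ≠ 0 := by exact_mod_cast (hqpos x hx).ne'
    exact (hexp.mul hnum).div hqC hqx
  · intro s hs hs0
    have hqs := hqpos s hs
    have hNpos : 0 < Real.sqrt (q s) := Real.sqrt_pos.mpr hqs
    have hN2 : Real.sqrt (q s) ^ 2 = q s := Real.sq_sqrt hqs.le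
    have hinner : (inner ℝ (u - s • v) n : ℝ) = c - s * d := by
      rw [inner_sub_left, real_inner_smul_left]
    have hargeq : h * ((-2 * a + s * b) / (Real.sqrt (q s) + 1))
        = (h / s) * (Real.sqrt (q s) - 1) := by
      have hden : Real.sqrt (q s) + 1 ≠ 0 := by positivity
      have hN2' : Real.sqrt (q s) ^ 2 = 1 - 2 * a * s + ‖v‖ ^ 2 * s ^ 2 := by
        rw [hN2, hqdef]
      simp only [hb]
      field_simp
      linear_combination (-1) * hN2'
    have e3 : Complex.I * (k : ℂ) * ((h * ((-2 * a + s * b) / (Real.sqrt (q s) + 1)) : ℝ) : ℂ)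
        = Complex.I * k * ((h : ℂ) / s) * (((‖u - s • v‖ : ℝ) : ℂ) - 1) := by
      rw [hargeq, ← hNq s]; push_cast; ring
    have e2 : ((q s : ℝ) : ℂ) = ((‖u - s • v‖ : ℝ) : ℂ) ^ 2 := by
      rw [hq s]; push_cast; ring
    rw [hW]
    simp only
    rw [hinner, e2, e3]
  · rw [hW]
    simp only
    have hq0 : q 0 = 1 := by simp [hqdef]
    have e0 : Complex.I * (k : ℂ) * ((h * ((-2 * a + 0 * b) / (Real.sqrt (q 0) + 1)) : ℝ) : ℂ)
        = -(Complex.I * k * h * (a : ℂ)) := by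
      rw [hq0, Real.sqrt_one]; push_cast; ring
    rw [e0, hq0]
    push_cast
    ring
end

section
/- Let k ∈ ℝ, let u ∈ ℝ³ with |u| = 1, and let z ∈ ℝ³. Then r·e^{−ikr}·e^{ik|r·u − z|}/|r·u − z| tends to e^{−ik⟨u,z⟩} as r → ∞ (limit over real r tending to infinity). In other words, along any ray from the center, the analytic factor of the single-layer kernel tends to a finite limit at infinity. -/
open Filter Complex

theorem analytic_factor_tendsto_at_infinity
    (k : ℝ) (u z : EuclideanSpace ℝ (Fin 3)) (hu : ‖u‖ = 1) :
    Filter.Tendsto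
      (fun r : ℝ => (r : ℂ) * Complex.exp (-(Complex.I * k * r)) *
        Complex.exp (Complex.I * k * ‖r • u - z‖) / (‖r • u - z‖ : ℂ))
      Filter.atTop
      (nhds (Complex.exp (-(Complex.I * k * ((inner ℝ u z : ℝ) : ℂ))))) := by
  set a : ℝ := inner ℝ u z with ha
  set b : ℝ := ‖z‖ ^ 2 with hb
  have h1 : ∀ r : ℝ, ‖r • u - z‖ ^ 2 = r ^ 2 - 2 * r * a + b := by
    intro r
    rw [norm_sub_sq_real, norm_smul, real_inner_smul_left]
    simp only [hu, mul_one, Real.norm_eq_abs, mul_pow, ← ha, ← hb]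
    rw [_root_.sq_abs]
    ring
  have hA : Tendsto (fun r : ℝ => 2 * a / r) atTop (nhds 0) :=
    tendsto_const_nhds.div_atTop tendsto_id
  have hB : Tendsto (fun r : ℝ => b / r ^ 2) atTop (nhds 0) :=
    tendsto_const_nhds.div_atTop (tendsto_pow_atTop two_ne_zero)
  have h2 : Tendsto (fun r : ℝ => ‖r • u - z‖ ^ 2 / r ^ 2) atTop (nhds 1) := by
    have hlim := (tendsto_const_nhds (x := (1:ℝ)).sub hA).add hB
    simp only [sub_zero, add_zero] at hlim
    refine Tendsto.congr' ?_ hlim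
    filter_upwards [eventually_gt_atTop (0 : ℝ)] with r hr
    rw [h1 r]; field_simp
  have hφ : Tendsto (fun r : ℝ => ‖r • u - z‖ / r) atTop (nhds 1) := by
    have hs : Tendsto (fun r : ℝ => Real.sqrt (‖r • u - z‖ ^ 2 / r ^ 2)) atTop
        (nhds (Real.sqrt 1)) := (Real.continuous_sqrt.tendsto 1).comp h2
    rw [Real.sqrt_one] at hs
    refine Tendsto.congr' ?_ hs
    filter_upwards [eventually_gt_atTop (0 : ℝ)] with r hr
    rw [← div_pow, Real.sqrt_sq (by positivity)]
  -- ‖r•u-z‖ - r → -a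
  have hψ : Tendsto (fun r : ℝ => ‖r • u - z‖ - r) atTop (nhds (-a)) := by
    have hden : Tendsto (fun r : ℝ => ‖r • u - z‖ / r + 1) atTop (nhds 2) := by
      have := hφ.add (tendsto_const_nhds (x := (1:ℝ)))
      norm_num at this; exact this
    have hnum : Tendsto (fun r : ℝ => -(2 * a) + b / r) atTop (nhds (-(2 * a))) := by
      have := (tendsto_const_nhds (x := -(2*a))).add
        ((tendsto_const_nhds (x := b)).div_atTop (tendsto_id (α := ℝ)))
      simpa using this
    have hq := hnum.div hden (by norm_num)
    have : -(2 * a) / 2 = -a := by ring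
    rw [this] at hq
    refine Tendsto.congr' ?_ hq
    filter_upwards [eventually_gt_atTop (0 : ℝ)] with r hr
    have hpos : ‖r • u - z‖ / r + 1 > 0 := by positivity
    have h1r := h1 r
    simp only [Pi.div_apply]; field_simp
    nlinarith [h1 r, norm_nonneg (r • u - z)]
  -- assemble complex limit
  have key : ∀ r : ℝ, (r : ℂ) * Complex.exp (-(Complex.I * k * r)) *
        Complex.exp (Complex.I * k * ‖r • u - z‖) / (‖r • u - z‖ : ℂ) =
      ((‖r • u - z‖ / r : ℝ) : ℂ)⁻¹ *
        Complex.exp (Complex.I * k * ((‖r • u - z‖ - r : ℝ) : ℂ)) := by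
    intro r
    have h : Complex.I * k * ((‖r • u - z‖ - r : ℝ) : ℂ) =
        -(Complex.I * k * r) + Complex.I * k * (‖r • u - z‖ : ℂ) := by
      push_cast; ring
    rw [h, Complex.exp_add]
    push_cast
    rcases eq_or_ne (r : ℂ) 0 with h0 | h0
    · simp [h0]
    rcases eq_or_ne ((‖r • u - z‖ : ℝ) : ℂ) 0 with h2 | h2
    · simp [h2]
    field_simp
  have hAc : Tendsto (fun r : ℝ => ((‖r • u - z‖ / r : ℝ) : ℂ)⁻¹) atTop (nhds 1) := by
    have := ((Complex.continuous_ofReal.tendsto 1).comp hφ).inv₀ (by norm_num)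
    simpa using this
  have hBc : Tendsto (fun r : ℝ => Complex.exp (Complex.I * k * ((‖r • u - z‖ - r : ℝ) : ℂ)))
      atTop (nhds (Complex.exp (-(Complex.I * k * (a : ℂ))))) := by
    have hcont : Continuous fun t : ℝ => Complex.exp (Complex.I * k * (t : ℂ)) := by
      continuity
    have hpt : Complex.I * k * ((-a : ℝ) : ℂ) = -(Complex.I * k * (a : ℂ)) := by
      push_cast; ring
    have h := (hcont.tendsto (-a)).comp hψ
    rw [hpt] at h
    exact h
  have := hAc.mul hBc
  rw [one_mul] at this
  exact this.congr fun r => (key r).symm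
end

section
/- Let d be a natural number with d ≥ 2, let ν(τ) = (1/d − 1/2)·((π − τ)/π)³ + (1/d)·((τ − π)/π) + 1/2, and define w : [0, 2π] → ℝ by w(τ) = 2π·ν(τ)^d/(ν(τ)^d + ν(2π − τ)^d). Then ν(τ)^d + ν(2π − τ)^d > 0 for every τ ∈ [0, 2π]; w(0) = 0, w(π) = π, and w(2π) = 2π; w is strictly increasing on [0, 2π]; and w maps [0, 2π] bijectively onto [0, 2π]. -/
open Real Set

theorem graded_mesh_map_properties
    (d : ℕ) (hd : 2 ≤ d) (ν w : ℝ → ℝ)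
    (hν : ∀ τ : ℝ, ν τ =
      (1 / (d : ℝ) - 1 / 2) * ((π - τ) / π) ^ 3 + (1 / (d : ℝ)) * ((τ - π) / π) + 1 / 2)
    (hw : ∀ τ : ℝ, w τ = 2 * π * ν τ ^ d / (ν τ ^ d + ν (2 * π - τ) ^ d)) :
    (∀ τ ∈ Set.Icc (0 : ℝ) (2 * π), 0 < ν τ ^ d + ν (2 * π - τ) ^ d) ∧
    w 0 = 0 ∧ w π = π ∧ w (2 * π) = 2 * π ∧
    StrictMonoOn w (Set.Icc (0 : ℝ) (2 * π)) ∧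
    Set.BijOn w (Set.Icc (0 : ℝ) (2 * π)) (Set.Icc (0 : ℝ) (2 * π)) := by
  have hπ := pi_pos
  have hπ0 : π ≠ 0 := hπ.ne'
  have hd2 : (2:ℝ) ≤ (d:ℝ) := by exact_mod_cast hd
  have hdp : (0:ℝ) < d := by linarith
  have hd0 : d ≠ 0 := by omega
  -- ν strictly monotone
  have hmono : StrictMono ν := by
    intro x y hxy
    rw [hν x, hν y, ← sub_pos]
    have hQ : 0 ≤ (π-x)^2 + (π-x)*(π-y) + (π-y)^2 := by
      nlinarith [sq_nonneg ((π-x)+(π-y)), sq_nonneg ((π-x)-(π-y))]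
    have h2 : 0 < y - x := by linarith
    field_simp
    nlinarith [mul_nonneg (mul_nonneg (mul_nonneg (by linarith : (0:ℝ) ≤ (d:ℝ) - 2)
        (mul_nonneg h2.le hQ)) hdp.le) hπ.le,
      mul_pos (mul_pos h2 (mul_pos hdp (pow_pos hπ 3))) (by norm_num : (0:ℝ) < 2),
      mul_nonneg (by linarith : (0:ℝ) ≤ (d:ℝ) - 2) (mul_nonneg h2.le hQ),
      mul_pos h2 (pow_pos hπ 2)]
  -- symmetry
  have hsym : ∀ τ : ℝ, ν (2 * π - τ) = 1 - ν τ := by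
    intro τ; rw [hν, hν]; field_simp; ring
  have hν0 : ν 0 = 0 := by rw [hν]; field_simp; ring
  have hνπ : ν π = 1 / 2 := by rw [hν]; field_simp; ring
  have hν2π : ν (2 * π) = 1 := by rw [hν]; field_simp; ring
  -- bounds
  have hlb : ∀ τ ∈ Set.Icc (0:ℝ) (2*π), 0 ≤ ν τ := by
    intro τ hτ
    rcases eq_or_lt_of_le hτ.1 with h | h
    · rw [← h, hν0]
    · rw [← hν0]; exact (hmono h).le
  have hub : ∀ τ ∈ Set.Icc (0:ℝ) (2*π), ν τ ≤ 1 := by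
    intro τ hτ
    rcases eq_or_lt_of_le hτ.2 with h | h
    · rw [h, hν2π]
    · rw [← hν2π]; exact (hmono h).le
  -- denominator positivity
  have hden : ∀ τ ∈ Set.Icc (0:ℝ) (2*π), 0 < ν τ ^ d + ν (2 * π - τ) ^ d := by
    intro τ hτ
    rw [hsym]
    have h0 := hlb τ hτ
    have h1 := hub τ hτ
    rcases le_or_gt (ν τ) (1/2) with h | h
    · have : 0 < (1 - ν τ) ^ d := pow_pos (by linarith) d
      have : 0 ≤ (ν τ) ^ d := pow_nonneg h0 d
      linarith [pow_pos (by linarith : (0:ℝ) < 1 - ν τ) d, pow_nonneg h0 d]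
    · linarith [pow_pos (by linarith : (0:ℝ) < ν τ) d,
        pow_nonneg (by linarith : (0:ℝ) ≤ 1 - ν τ) d]
  -- values
  have hw0 : w 0 = 0 := by
    rw [hw]; rw [sub_zero, hν0, hν2π, zero_pow hd0, one_pow]; simp
  have hwπ : w π = π := by
    have : (2:ℝ) * π - π = π := by ring
    rw [hw, this, hνπ]
    have hc : (0:ℝ) < (1/2:ℝ) ^ d := pow_pos (by norm_num) d
    rw [div_eq_iff (by positivity)]; ring
  have hw2π : w (2 * π) = 2 * π := by
    rw [hw]
    have : (2:ℝ) * π - 2 * π = 0 := by ring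
    rw [this, hν0, hν2π, zero_pow hd0, one_pow]; simp
  -- strict monotonicity of w
  have hsm : StrictMonoOn w (Set.Icc (0:ℝ) (2*π)) := by
    intro τ₁ h₁ τ₂ h₂ hlt
    have hDx := hden τ₁ h₁
    have hDy := hden τ₂ h₂
    rw [hw τ₁, hw τ₂, div_lt_div_iff₀ hDx hDy]
    rw [hsym, hsym] at *
    set x := ν τ₁
    set y := ν τ₂
    have hx0 : 0 ≤ x := hlb τ₁ h₁
    have hy1 : y ≤ 1 := hub τ₂ h₂
    have hxy : x < y := hmono hlt
    have key : (x * (1 - y)) ^ d < (y * (1 - x)) ^ d := by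
      apply pow_lt_pow_left₀ _ (by nlinarith) hd0
      nlinarith
    rw [mul_pow, mul_pow] at key
    nlinarith [mul_lt_mul_of_pos_left key (by positivity : (0:ℝ) < 2 * π)]
  -- continuity of w on Icc
  have hνc : Continuous ν := by
    have : ν = fun τ => (1 / (d : ℝ) - 1 / 2) * ((π - τ) / π) ^ 3 +
        (1 / (d : ℝ)) * ((τ - π) / π) + 1 / 2 := funext hν
    rw [this]; fun_prop
  have hwc : ContinuousOn w (Set.Icc (0:ℝ) (2*π)) := by
    apply ContinuousOn.congr (f := fun τ => 2 * π * ν τ ^ d / (ν τ ^ d + ν (2 * π - τ) ^ d))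
    · apply ContinuousOn.div
      · fun_prop
      · fun_prop
      · intro τ hτ; exact (hden τ hτ).ne'
    · intro τ hτ; exact hw τ
  -- maps to
  have hmaps : Set.MapsTo w (Set.Icc (0:ℝ) (2*π)) (Set.Icc (0:ℝ) (2*π)) := by
    intro τ hτ
    have hD := hden τ hτ
    rw [hw]
    constructor
    · exact div_nonneg (mul_nonneg (by positivity) (pow_nonneg (hlb τ hτ) d)) hD.le
    · rw [div_le_iff₀ hD]
      have h1 : 0 ≤ ν (2*π - τ) := by rw [hsym]; linarith [hub τ hτ]
      rw [mul_add]
      have h2 : (0:ℝ) ≤ 2 * π * ν (2*π - τ) ^ d :=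
        mul_nonneg (by positivity) (pow_nonneg h1 d)
      linarith
  -- surjectivity
  have hsurj : Set.SurjOn w (Set.Icc (0:ℝ) (2*π)) (Set.Icc (0:ℝ) (2*π)) := by
    have := intermediate_value_Icc (by positivity : (0:ℝ) ≤ 2*π) hwc
    rw [hw0, hw2π] at this
    exact this
  exact ⟨hden, hw0, hwπ, hw2π, hsm, ⟨hmaps, hsm.injOn, hsurj⟩⟩
end

section
/- Let d be a natural number with d ≥ 2, let ν(τ) = (1/d − 1/2)·((π − τ)/π)³ + (1/d)·((τ − π)/π) + 1/2, and let w(τ) = 2π·ν(τ)^d/(ν(τ)^d + ν(2π − τ)^d) for τ ∈ [0, 2π]. Then w is infinitely differentiable on the closed interval [0, 2π] (in the sense of ContDiffOn of all orders within [0, 2π]), and for every natural number m with 1 ≤ m ≤ d − 1 the m-th iterated derivative of w within [0, 2π] vanishes at both endpoints: (d/dτ)^m w(0) = 0 and (d/dτ)^m w(2π) = 0. -/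
open Real Set

lemma bridge_iteratedDerivWithin' {f : ℝ → ℝ} {U s : Set ℝ} (hU : IsOpen U)
    (hf : ContDiffOn ℝ (⊤ : ℕ∞) f U) (hs : UniqueDiffOn ℝ s) (hsU : s ⊆ U)
    {x : ℝ} (hx : x ∈ s) (m : ℕ) :
    iteratedDerivWithin m f s x = iteratedDeriv m f x := by
  have hT : HasFTaylorSeriesUpToOn ((⊤ : ℕ∞) : WithTop ℕ∞) f (ftaylorSeriesWithin ℝ f U) U :=
    hf.ftaylorSeriesWithin hU.uniqueDiffOn
  have h1 := (hT.mono hsU).eq_iteratedFDerivWithin_of_uniqueDiffOn (m := m) (by exact_mod_cast le_top) hs hx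
  have h2 := hT.eq_iteratedFDerivWithin_of_uniqueDiffOn (m := m) (by exact_mod_cast le_top) hU.uniqueDiffOn (hsU hx)
  rw [iteratedDerivWithin_eq_iteratedFDerivWithin, iteratedDeriv_eq_iteratedFDeriv,
    ← h1, h2, iteratedFDerivWithin_of_isOpen m hU (hsU hx)]

lemma factor_iteratedDeriv' {U : Set ℝ} (hU : IsOpen U) (x : ℝ) (n : ℕ)
    {f H : ℝ → ℝ} (hH : ContDiffOn ℝ (⊤ : ℕ∞) H U)
    (hf : ∀ t ∈ U, f t = (t - x) ^ n * H t) :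
    ∀ m, m ≤ n → ∃ G : ℝ → ℝ, ContDiffOn ℝ (⊤ : ℕ∞) G U ∧
      ∀ t ∈ U, iteratedDeriv m f t = (t - x) ^ (n - m) * G t := by
  intro m
  induction m with
  | zero => intro _; exact ⟨H, hH, by simpa [iteratedDeriv_zero] using hf⟩
  | succ m ih =>
    intro hmn
    obtain ⟨G, hG, hGf⟩ := ih (Nat.le_of_succ_le hmn)
    have hG' : ContDiffOn ℝ (⊤ : ℕ∞) (deriv G) U := hG.deriv_of_isOpen hU (by simp)
    refine ⟨fun t => (n - m : ℕ) * G t + (t - x) * deriv G t, ?_, ?_⟩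
    · exact (contDiffOn_const.mul hG).add ((contDiffOn_id.sub contDiffOn_const).mul hG')
    · intro t ht
      have hev : iteratedDeriv m f =ᶠ[nhds t] fun s => (s - x) ^ (n - m) * G s := by
        filter_upwards [hU.mem_nhds ht] with s hs using hGf s hs
      have hGd : DifferentiableAt ℝ G t :=
        (hG.contDiffAt (hU.mem_nhds ht)).differentiableAt (by simp)
      have hd1 : HasDerivAt (fun s => (s - x) ^ (n - m))
          ((n - m : ℕ) * (t - x) ^ (n - m - 1)) t := by
        simpa [Pi.pow_def] using ((hasDerivAt_id t).sub_const x).pow (n - m)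
      have hd : deriv (fun s => (s - x) ^ (n - m) * G s) t =
          ((n - m : ℕ) * (t - x) ^ (n - m - 1)) * G t
            + (t - x) ^ (n - m) * deriv G t := (hd1.mul hGd.hasDerivAt).deriv
      rw [iteratedDeriv_succ, hev.deriv_eq, hd]
      have h1 : n - m - 1 = n - (m + 1) := by omega
      have h2 : n - m = (n - (m + 1)) + 1 := by omega
      rw [h1, h2, pow_succ]
      ring

theorem graded_mesh_map_smooth_and_derivatives_vanish
    (d : ℕ) (hd : 2 ≤ d) (ν w : ℝ → ℝ)
    (hν : ∀ τ : ℝ, ν τ =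
      (1 / (d : ℝ) - 1 / 2) * ((π - τ) / π) ^ 3 + (1 / (d : ℝ)) * ((τ - π) / π) + 1 / 2)
    (hw : ∀ τ : ℝ, w τ = 2 * π * ν τ ^ d / (ν τ ^ d + ν (2 * π - τ) ^ d)) :
    ContDiffOn ℝ (⊤ : ℕ∞) w (Set.Icc (0 : ℝ) (2 * π)) ∧
    ∀ m : ℕ, 1 ≤ m → m ≤ d - 1 →
      iteratedDerivWithin m w (Set.Icc (0 : ℝ) (2 * π)) 0 = 0 ∧
      iteratedDerivWithin m w (Set.Icc (0 : ℝ) (2 * π)) (2 * π) = 0 := by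
  have hπ : (0:ℝ) < π := pi_pos
  have hπ2 : (0:ℝ) < 2 * π := by linarith
  have hd0 : (0:ℝ) < (d:ℝ) := by exact_mod_cast (by omega : 0 < d)
  have hd2 : (2:ℝ) ≤ (d:ℝ) := by exact_mod_cast hd
  set a : ℝ := 1 / (d:ℝ) - 1 / 2 with ha
  set r : ℝ → ℝ := fun τ => (1 / (d:ℝ) - 3 * a) / π + 3 * a / π ^ 2 * τ - a / π ^ 3 * τ ^ 2
    with hr
  -- factorization ν τ = τ * r τ
  have hfac : ∀ τ : ℝ, ν τ = τ * r τ := by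
    intro τ
    rw [hν, hr, ha]
    field_simp
    ring
  -- r is everywhere positive
  have hrpos : ∀ τ : ℝ, 0 < r τ := by
    intro τ
    have key : r τ = 1 / ((d:ℝ) * π)
        + ((1 / 2 - 1 / (d:ℝ)) * ((τ - 3 * π / 2) ^ 2 + 3 * π ^ 2 / 4)) / π ^ 3 := by
      rw [hr, ha]; field_simp; ring
    have h1 : 0 < 1 / ((d:ℝ) * π) := by positivity
    have h2 : (0:ℝ) ≤ 1 / 2 - 1 / (d:ℝ) := by
      have : 1 / (d:ℝ) ≤ 1 / 2 := by
        apply one_div_le_one_div_of_le <;> linarith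
      linarith
    have h3 : (0:ℝ) ≤ ((1 / 2 - 1 / (d:ℝ)) * ((τ - 3 * π / 2) ^ 2 + 3 * π ^ 2 / 4)) / π ^ 3 := by
      apply div_nonneg (mul_nonneg h2 (by positivity)) (by positivity)
    rw [key]; linarith
  have hνnn : ∀ u : ℝ, 0 ≤ u → 0 ≤ ν u := fun u hu => by
    rw [hfac]; exact mul_nonneg hu (hrpos u).le
  have hνpos : ∀ u : ℝ, 0 < u → 0 < ν u := fun u hu => by
    rw [hfac]; exact mul_pos hu (hrpos u)
  -- smoothness of ν
  have hνsm : ContDiff ℝ (⊤ : ℕ∞) ν := by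
    rw [funext hν]
    exact ((contDiff_const.mul (((contDiff_const.sub contDiff_id).div_const π).pow 3)).add
      (contDiff_const.mul ((contDiff_id.sub contDiff_const).div_const π))).add contDiff_const
  have hrsm : ContDiff ℝ (⊤ : ℕ∞) r := by
    rw [hr]
    exact ((contDiff_const.add (contDiff_const.mul contDiff_id)).sub
      (contDiff_const.mul (contDiff_id.pow 2)))
  -- the denominator
  have hQsm : ContDiff ℝ (⊤ : ℕ∞) (fun t : ℝ => ν t ^ d + ν (2 * π - t) ^ d) :=
    (hνsm.pow d).add ((hνsm.comp (contDiff_const.sub contDiff_id)).pow d)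
  set U : Set ℝ := {t | 0 < ν t ^ d + ν (2 * π - t) ^ d} with hUdef
  have hUopen : IsOpen U := isOpen_lt continuous_const hQsm.continuous
  have hIccU : Set.Icc (0:ℝ) (2 * π) ⊆ U := by
    rintro t ⟨h0, h2⟩
    rcases eq_or_lt_of_le h0 with h | h
    · have : 0 < ν (2 * π - t) := hνpos _ (by rw [← h]; linarith)
      exact add_pos_of_nonneg_of_pos (pow_nonneg (hνnn t h0) d) (pow_pos this d)
    · exact add_pos_of_pos_of_nonneg (pow_pos (hνpos t h) d)
        (pow_nonneg (hνnn _ (by linarith)) d)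
  have hQne : ∀ t ∈ U, ν t ^ d + ν (2 * π - t) ^ d ≠ 0 := fun t ht => ne_of_gt ht
  have hwU : ContDiffOn ℝ (⊤ : ℕ∞) w U := by
    have h1 : ContDiffOn ℝ (⊤ : ℕ∞) (fun t => 2 * π * ν t ^ d / (ν t ^ d + ν (2 * π - t) ^ d)) U :=
      (contDiff_const.mul (hνsm.pow d)).contDiffOn.div hQsm.contDiffOn hQne
    exact h1.congr fun t _ => hw t
  have hUD : UniqueDiffOn ℝ (Set.Icc (0:ℝ) (2 * π)) := uniqueDiffOn_Icc hπ2
  have h0mem : (0:ℝ) ∈ Set.Icc (0:ℝ) (2 * π) := ⟨le_refl _, by linarith⟩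
  have h2mem : (2 * π) ∈ Set.Icc (0:ℝ) (2 * π) := ⟨by linarith, le_refl _⟩
  refine ⟨hwU.mono hIccU, ?_⟩
  intro m hm1 hmd
  have hmlt : m < d := by omega
  constructor
  · -- at 0
    rw [bridge_iteratedDerivWithin' hUopen hwU hUD hIccU h0mem m]
    have hH : ContDiffOn ℝ (⊤ : ℕ∞) (fun t : ℝ =>
        2 * π * r t ^ d / (ν t ^ d + ν (2 * π - t) ^ d)) U :=
      (contDiff_const.mul (hrsm.pow d)).contDiffOn.div hQsm.contDiffOn hQne
    have hw0 : ∀ t ∈ U, w t = (t - 0) ^ d *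
        (2 * π * r t ^ d / (ν t ^ d + ν (2 * π - t) ^ d)) := by
      intro t ht
      rw [hw t]
      rw [show ν t ^ d = t ^ d * r t ^ d by rw [hfac t, mul_pow], sub_zero]
      ring
    obtain ⟨G, hG, hGf⟩ := factor_iteratedDeriv' hUopen 0 d hH hw0 m hmlt.le
    rw [hGf 0 (hIccU h0mem)]
    rw [sub_zero, zero_pow (by omega : d - m ≠ 0), zero_mul]
  · -- at 2π
    rw [bridge_iteratedDerivWithin' hUopen hwU hUD hIccU h2mem m]
    obtain ⟨k, rfl⟩ : ∃ k, m = k + 1 := ⟨m - 1, by omega⟩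
    have hshift : iteratedDeriv (k + 1) w = iteratedDeriv (k + 1) (fun t => w t - 2 * π) := by
      have hds : (deriv fun t => w t - 2 * π) = deriv w :=
        funext fun t => deriv_sub_const (2 * π)
      rw [iteratedDeriv_succ', iteratedDeriv_succ', hds]
    rw [hshift]
    have hH : ContDiffOn ℝ (⊤ : ℕ∞) (fun t : ℝ =>
        -(2 * π) * (-(r (2 * π - t))) ^ d / (ν t ^ d + ν (2 * π - t) ^ d)) U := by
      refine ContDiffOn.div ?_ hQsm.contDiffOn hQne
      exact (contDiff_const.mul
        (((hrsm.comp (contDiff_const.sub contDiff_id)).neg).pow d)).contDiffOn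
    have hw2 : ∀ t ∈ U, w t - 2 * π = (t - 2 * π) ^ d *
        (-(2 * π) * (-(r (2 * π - t))) ^ d / (ν t ^ d + ν (2 * π - t) ^ d)) := by
      intro t ht
      have hp : ν (2 * π - t) ^ d = (t - 2 * π) ^ d * (-(r (2 * π - t))) ^ d := by
        rw [hfac (2 * π - t), ← mul_pow]
        congr 1
        ring
      have hne := hQne t ht
      rw [hw t]
      rw [hp] at hne ⊢
      field_simp
      ring
    obtain ⟨G, hG, hGf⟩ := factor_iteratedDeriv' hUopen (2 * π) d hH hw2 (k + 1) hmlt.le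
    rw [hGf (2 * π) (hIccU h2mem)]
    rw [sub_self, zero_pow (by omega : d - (k + 1) ≠ 0), zero_mul]
end

section
/- Let d be a natural number with d ≥ 2, let w : [0, 2π] → [0, 2π] be the graded-mesh map w(τ) = 2π·ν(τ)^d/(ν(τ)^d + ν(2π − τ)^d) with ν(τ) = (1/d − 1/2)·((π − τ)/π)³ + (1/d)·((τ − π)/π) + 1/2, let α ∈ (−1, 1), and define ξ_α : [−1, 1] → ℝ by ξ_α(τ) = α + ((sgn(τ) − α)/π)·w(π|τ|). Then ξ_α(−1) = −1, ξ_α(0) = α, ξ_α(1) = 1, ξ_α is strictly increasing on [−1, 1], and ξ_α maps [−1, 1] bijectively onto [−1, 1]. -/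
open Real Set

set_option maxHeartbeats 2000000 in
theorem rectangular_polar_change_of_variables_properties
    (d : ℕ) (hd : 2 ≤ d) (ν w : ℝ → ℝ)
    (hν : ∀ τ : ℝ, ν τ =
      (1 / (d : ℝ) - 1 / 2) * ((π - τ) / π) ^ 3 + (1 / (d : ℝ)) * ((τ - π) / π) + 1 / 2)
    (hw : ∀ τ : ℝ, w τ = 2 * π * ν τ ^ d / (ν τ ^ d + ν (2 * π - τ) ^ d))
    (α : ℝ) (hα : α ∈ Set.Ioo (-1 : ℝ) 1) (ξ : ℝ → ℝ)
    (hξ : ∀ τ : ℝ, ξ τ = α + ((Real.sign τ - α) / π) * w (π * |τ|)) :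
    ξ (-1) = -1 ∧ ξ 0 = α ∧ ξ 1 = 1 ∧
    StrictMonoOn ξ (Set.Icc (-1 : ℝ) 1) ∧
    Set.BijOn ξ (Set.Icc (-1 : ℝ) 1) (Set.Icc (-1 : ℝ) 1) := by
  have hπ : (0:ℝ) < π := Real.pi_pos
  have hπ' : (π:ℝ) ≠ 0 := ne_of_gt hπ
  have hd2 : (2:ℝ) ≤ (d:ℝ) := by exact_mod_cast hd
  have hdpos : (0:ℝ) < (d:ℝ) := by linarith
  have hdne : d ≠ 0 := by omega
  have hα1 : α < 1 := hα.2
  have hα2 : -1 < α := hα.1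
  -- basic ν facts
  have hsym : ∀ τ : ℝ, ν (2*π - τ) = 1 - ν τ := by
    intro τ; rw [hν, hν]; field_simp; ring
  have hν0 : ν 0 = 0 := by rw [hν]; field_simp; ring
  have hνπ : ν π = 1/2 := by rw [hν]; field_simp; ring
  have hA : (0:ℝ) ≤ 1/2 - 1/(d:ℝ) := by
    have h1 : 1/(d:ℝ) ≤ 1/2 := by
      apply one_div_le_one_div_of_le <;> linarith
    linarith
  have e1 : ∀ τ:ℝ, ν τ = (1/2 - 1/(d:ℝ)) * ((τ-π)/π)^3 + (1/(d:ℝ)) * ((τ-π)/π) + 1/2 := by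
    intro τ; rw [hν]; ring
  have hνmono : StrictMono ν := by
    intro a b hab
    rw [e1 a, e1 b]
    have hs : (a-π)/π < (b-π)/π := by gcongr
    have hcube : ((a-π)/π)^3 ≤ ((b-π)/π)^3 :=
      ((Odd.strictMono_pow (R := ℝ) (by decide)).le_iff_le.mpr hs.le)
    have h1 := mul_le_mul_of_nonneg_left hcube hA
    have h2 : (1/(d:ℝ)) * ((a-π)/π) < (1/(d:ℝ)) * ((b-π)/π) :=
      mul_lt_mul_of_pos_left hs (by positivity)
    linarith
  have hν_nonneg : ∀ t ∈ Icc (0:ℝ) π, 0 ≤ ν t := by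
    intro t ht
    have := hνmono.monotone ht.1
    rw [hν0] at this; exact this
  have hν_le : ∀ t ∈ Icc (0:ℝ) π, ν t ≤ 1/2 := by
    intro t ht
    have := hνmono.monotone ht.2
    rw [hνπ] at this; exact this
  have hden : ∀ t ∈ Icc (0:ℝ) π, 0 < ν t ^ d + (1 - ν t) ^ d := by
    intro t ht
    have h1 := hν_nonneg t ht
    have h2 := hν_le t ht
    have h3 : 0 < (1 - ν t)^d := pow_pos (by linarith) d
    have h4 : 0 ≤ ν t ^ d := pow_nonneg h1 d
    linarith
  -- w facts
  have hw0 : w 0 = 0 := by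
    rw [hw, hν0, zero_pow hdne]
    simp
  have hwπ : w π = π := by
    have h2 : 2*π - π = π := by ring
    rw [hw, h2, hνπ]
    have hp : (0:ℝ) < (1/2:ℝ)^d := by positivity
    field_simp
    ring
  have hwmono : ∀ a b : ℝ, a ∈ Icc (0:ℝ) π → b ∈ Icc (0:ℝ) π → a < b → w a < w b := by
    intro a b ha hb hab
    have hx0 := hν_nonneg a ha
    have hx2 := hν_le a ha
    have hy0 := hν_nonneg b hb
    have hy2 := hν_le b hb
    have hxy : ν a < ν b := hνmono hab
    have hda := hden a ha
    have hdb := hden b hb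
    rw [hw, hw]
    simp only [hsym]
    rw [div_lt_div_iff₀ hda hdb]
    have hlt : ν a * (1 - ν b) < ν b * (1 - ν a) := by nlinarith
    have hnn : 0 ≤ ν a * (1 - ν b) := mul_nonneg hx0 (by linarith)
    have key : (ν a * (1 - ν b))^d < (ν b * (1 - ν a))^d := pow_lt_pow_left₀ hlt hnn hdne
    rw [mul_pow, mul_pow] at key
    have h2π : (0:ℝ) < 2*π := by linarith
    nlinarith [mul_lt_mul_of_pos_left key h2π, pow_nonneg hx0 d, pow_nonneg hy0 d]
  have hwpos : ∀ t : ℝ, 0 < t → t ≤ π → 0 < w t := by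
    intro t h1 h2
    have := hwmono 0 t ⟨le_refl _, hπ.le⟩ ⟨h1.le, h2⟩ h1
    rw [hw0] at this; exact this
  -- ξ values
  have hξ0 : ξ 0 = α := by
    rw [hξ]; simp [Real.sign_zero, hw0]
  have hξpos' : ∀ τ:ℝ, 0 < τ → ξ τ = α + ((1-α)/π) * w (π * τ) := by
    intro τ h; rw [hξ, Real.sign_of_pos h, abs_of_pos h]
  have hξneg' : ∀ τ:ℝ, τ < 0 → ξ τ = α + ((-1-α)/π) * w (π * (-τ)) := by
    intro τ h; rw [hξ, Real.sign_of_neg h, abs_of_neg h]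
  have hξ1 : ξ 1 = 1 := by
    rw [hξpos' 1 one_pos, mul_one, hwπ, div_mul_cancel₀ _ hπ']; ring
  have hξm1 : ξ (-1) = -1 := by
    rw [hξneg' (-1) (by norm_num), neg_neg, mul_one, hwπ, div_mul_cancel₀ _ hπ']
    ring
  have hgtα : ∀ τ:ℝ, 0 < τ → τ ≤ 1 → α < ξ τ := by
    intro τ h1 h2
    rw [hξpos' τ h1]
    have hwp : 0 < w (π*τ) := hwpos _ (mul_pos hπ h1) (by nlinarith)
    have : 0 < ((1-α)/π) * w (π*τ) := mul_pos (div_pos (by linarith) hπ) hwp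
    linarith
  have hltα : ∀ τ:ℝ, -1 ≤ τ → τ < 0 → ξ τ < α := by
    intro τ h1 h2
    rw [hξneg' τ h2]
    have hwp : 0 < w (π*(-τ)) := hwpos _ (mul_pos hπ (by linarith)) (by nlinarith)
    have hc : ((-1-α)/π) < 0 := div_neg_of_neg_of_pos (by linarith) hπ
    have : ((-1-α)/π) * w (π*(-τ)) < 0 := mul_neg_of_neg_of_pos hc hwp
    linarith
  -- strict monotonicity
  have hSM : StrictMonoOn ξ (Set.Icc (-1 : ℝ) 1) := by
    intro a ha b hb hab
    rcases lt_trichotomy a 0 with hva|hva|hva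
    · rcases lt_trichotomy b 0 with hvb|hvb|hvb
      · rw [hξneg' a hva, hξneg' b hvb]
        have m1 : (0:ℝ) ≤ π * -b := mul_nonneg hπ.le (by linarith)
        have m2 : π * -b ≤ π := by nlinarith [ha.1]
        have m3 : (0:ℝ) ≤ π * -a := mul_nonneg hπ.le (by linarith)
        have m4 : π * -a ≤ π := by nlinarith [ha.1]
        have m5 : π * -b < π * -a := by nlinarith
        have hm : w (π * -b) < w (π * -a) := hwmono (π * -b) (π * -a) ⟨m1, m2⟩ ⟨m3, m4⟩ m5
        have hc : ((-1-α)/π) < 0 := div_neg_of_neg_of_pos (by linarith) hπ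
        have := mul_lt_mul_of_neg_left hm hc
        linarith
      · subst hvb; rw [hξ0]; exact hltα a ha.1 hva
      · calc ξ a < α := hltα a ha.1 hva
          _ < ξ b := hgtα b hvb hb.2
    · subst hva; rw [hξ0]; exact hgtα b hab hb.2
    · rw [hξpos' a hva, hξpos' b (by linarith)]
      have m1 : (0:ℝ) ≤ π * a := mul_nonneg hπ.le (by linarith)
      have m2 : π * a ≤ π := by nlinarith [hb.2]
      have m3 : (0:ℝ) ≤ π * b := mul_nonneg hπ.le (by linarith)
      have m4 : π * b ≤ π := by nlinarith [hb.2]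
      have m5 : π * a < π * b := by nlinarith
      have hm : w (π * a) < w (π * b) := hwmono (π * a) (π * b) ⟨m1, m2⟩ ⟨m3, m4⟩ m5
      have hc : 0 < (1-α)/π := div_pos (by linarith) hπ
      have := mul_lt_mul_of_pos_left hm hc
      linarith
  -- continuity of ν
  have hνc : Continuous ν := by
    have hfun : ν = fun τ => (1 / (d : ℝ) - 1 / 2) * ((π - τ) / π) ^ 3 +
        (1 / (d : ℝ)) * ((τ - π) / π) + 1 / 2 := funext hν
    rw [hfun]; fun_prop
  -- surjectivity
  have hsurj : Set.SurjOn ξ (Set.Icc (-1 : ℝ) 1) (Set.Icc (-1 : ℝ) 1) := by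
    intro y hy
    rcases le_total α y with hyα | hyα
    · -- positive branch
      set f : ℝ → ℝ := fun τ =>
        α + ((1-α)/π) * (2*π* ν (π*τ)^d / (ν (π*τ)^d + ν (2*π - π*τ)^d)) with hfdef
      have hfeq : EqOn ξ f (Icc (0:ℝ) 1) := by
        intro τ hτ
        rcases eq_or_lt_of_le hτ.1 with h|h
        · rw [← h, hξ0, hfdef]
          simp [hν0, zero_pow hdne]
        · rw [hξpos' τ h, hw]
      have h1 : Continuous fun τ:ℝ => ν (π*τ) := hνc.comp (by fun_prop)
      have h2 : Continuous fun τ:ℝ => ν (2*π - π*τ) := hνc.comp (by fun_prop)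
      have hfc : ContinuousOn f (Icc (0:ℝ) 1) := by
        apply ContinuousOn.add continuousOn_const
        apply ContinuousOn.mul continuousOn_const
        apply ContinuousOn.div
        · exact (continuous_const.mul (h1.pow d)).continuousOn
        · exact ((h1.pow d).add (h2.pow d)).continuousOn
        · intro τ hτ
          rw [hsym]
          exact ne_of_gt (hden (π*τ) ⟨by nlinarith [hτ.1], by nlinarith [hτ.2]⟩)
      have hf0 : f 0 = α := ((hfeq (by norm_num : (0:ℝ) ∈ Icc 0 1)).symm).trans hξ0
      have hf1 : f 1 = 1 := ((hfeq (by norm_num : (1:ℝ) ∈ Icc 0 1)).symm).trans hξ1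
      have hIVT := intermediate_value_Icc (by norm_num : (0:ℝ) ≤ 1) hfc
      have hymem : y ∈ Icc (f 0) (f 1) := by rw [hf0, hf1]; exact ⟨hyα, hy.2⟩
      obtain ⟨x, hx, hfx⟩ := hIVT hymem
      exact ⟨x, ⟨by linarith [hx.1], hx.2⟩, (hfeq hx).trans hfx⟩
    · -- negative branch
      set g : ℝ → ℝ := fun τ =>
        α + ((-1-α)/π) * (2*π* ν (π*(-τ))^d / (ν (π*(-τ))^d + ν (2*π - π*(-τ))^d)) with hgdef
      have hgeq : EqOn ξ g (Icc (-1:ℝ) 0) := by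
        intro τ hτ
        rcases eq_or_lt_of_le hτ.2 with h|h
        · rw [h, hξ0, hgdef]
          simp [hν0, zero_pow hdne]
        · rw [hξneg' τ h, hw]
      have h1 : Continuous fun τ:ℝ => ν (π*(-τ)) := hνc.comp (by fun_prop)
      have h2 : Continuous fun τ:ℝ => ν (2*π - π*(-τ)) := hνc.comp (by fun_prop)
      have hgc : ContinuousOn g (Icc (-1:ℝ) 0) := by
        apply ContinuousOn.add continuousOn_const
        apply ContinuousOn.mul continuousOn_const
        apply ContinuousOn.div
        · exact (continuous_const.mul (h1.pow d)).continuousOn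
        · exact ((h1.pow d).add (h2.pow d)).continuousOn
        · intro τ hτ
          rw [hsym]
          exact ne_of_gt (hden (π*(-τ)) ⟨by nlinarith [hτ.2], by nlinarith [hτ.1]⟩)
      have hg0 : g (-1) = -1 := ((hgeq (by norm_num : (-1:ℝ) ∈ Icc (-1) 0)).symm).trans hξm1
      have hg1 : g 0 = α := ((hgeq (by norm_num : (0:ℝ) ∈ Icc (-1) 0)).symm).trans hξ0
      have hIVT := intermediate_value_Icc (by norm_num : (-1:ℝ) ≤ 0) hgc
      have hymem : y ∈ Icc (g (-1)) (g 0) := by rw [hg0, hg1]; exact ⟨hy.1, hyα⟩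
      obtain ⟨x, hx, hgx⟩ := hIVT hymem
      exact ⟨x, ⟨hx.1, by linarith [hx.2]⟩, (hgeq hx).trans hgx⟩
  have hmaps : Set.MapsTo ξ (Set.Icc (-1 : ℝ) 1) (Set.Icc (-1 : ℝ) 1) := by
    intro x hx
    have hm1 : (-1:ℝ) ∈ Icc (-1:ℝ) 1 := by norm_num
    have h1 : (1:ℝ) ∈ Icc (-1:ℝ) 1 := by norm_num
    constructor
    · have := hSM.monotoneOn hm1 hx hx.1
      rw [hξm1] at this; exact this
    · have := hSM.monotoneOn hx h1 hx.2
      rw [hξ1] at this; exact this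
  exact ⟨hξm1, hξ0, hξ1, hSM, hmaps, hSM.injOn, hsurj⟩
end

section
/- Let n be a positive integer and for k = 0, …, n−1 let x_k = cos((2k+1)π/(2n)) be the Chebyshev–Gauss nodes. For all natural numbers i, j with 0 ≤ i ≤ n−1 and 0 ≤ j ≤ n−1, the discrete orthogonality relation ∑_{k=0}^{n−1} T_i(x_k)·T_j(x_k) = 0 holds if i ≠ j; the sum equals n if i = j = 0; and the sum equals n/2 if i = j ≥ 1. -/
open Real Finset

lemma sum_cos_nodes (n m : ℕ) (hn : 0 < n) (hm : 1 ≤ m) (hlt : m < 2 * n) :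
    ∑ k ∈ Finset.range n, Real.cos ((m : ℝ) * ((2 * k + 1) * π / (2 * n))) = 0 := by
  set a : ℝ := (m : ℝ) * π / (2 * n) with ha
  have hn' : (0 : ℝ) < n := by exact_mod_cast hn
  have hapos : 0 < a := by
    apply div_pos (mul_pos (by exact_mod_cast hm) Real.pi_pos)
    linarith
  have halt : a < π := by
    rw [ha, div_lt_iff₀ (by linarith)]
    have : (m : ℝ) < 2 * n := by exact_mod_cast hlt
    nlinarith [Real.pi_pos]
  have hsinpos : 0 < Real.sin a := Real.sin_pos_of_pos_of_lt_pi hapos halt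
  have key : ∀ k : ℕ, 2 * Real.sin a * Real.cos ((m : ℝ) * ((2 * k + 1) * π / (2 * n)))
      = Real.sin (2 * ((k : ℝ) + 1) * a) - Real.sin (2 * k * a) := by
    intro k
    have harg : (m : ℝ) * ((2 * k + 1) * π / (2 * n)) = (2 * k + 1) * a := by
      rw [ha]; ring
    rw [harg]
    have h1 : (2 * ((k : ℝ) + 1)) * a = (2 * k + 1) * a + a := by ring
    have h2 : (2 * (k : ℝ)) * a = (2 * k + 1) * a - a := by ring
    rw [h1, h2, Real.sin_add, Real.sin_sub]
    ring
  have htel : ∑ k ∈ Finset.range n, (Real.sin (2 * ((k : ℝ) + 1) * a) - Real.sin (2 * k * a))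
      = Real.sin (2 * n * a) - Real.sin (2 * 0 * a) := by
    have := Finset.sum_range_sub (fun k : ℕ => Real.sin (2 * k * a)) n
    simpa using this
  have hend : Real.sin (2 * (n : ℝ) * a) = 0 := by
    have : 2 * (n : ℝ) * a = m * π := by
      rw [ha]; field_simp
    rw [this]
    simpa using Real.sin_int_mul_pi (m : ℤ)
  have hsum : 2 * Real.sin a * ∑ k ∈ Finset.range n,
      Real.cos ((m : ℝ) * ((2 * k + 1) * π / (2 * n))) = 0 := by
    rw [Finset.mul_sum]
    calc ∑ k ∈ Finset.range n, 2 * Real.sin a * Real.cos ((m : ℝ) * ((2 * k + 1) * π / (2 * n)))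
        = ∑ k ∈ Finset.range n, (Real.sin (2 * ((k : ℝ) + 1) * a) - Real.sin (2 * k * a)) :=
          Finset.sum_congr rfl fun k _ => key k
      _ = Real.sin (2 * n * a) - Real.sin (2 * 0 * a) := htel
      _ = 0 := by rw [hend]; simp
  have h2s : 2 * Real.sin a ≠ 0 := by positivity
  exact (mul_eq_zero.mp hsum).resolve_left h2s

theorem chebyshev_discrete_orthogonality
    (n : ℕ) (hn : 0 < n) (x : ℕ → ℝ)
    (hx : ∀ k : ℕ, x k = Real.cos ((2 * k + 1) * π / (2 * n)))
    (i j : ℕ) (hi : i ≤ n - 1) (hj : j ≤ n - 1) :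
    (i ≠ j →
      ∑ k ∈ Finset.range n,
        (Polynomial.Chebyshev.T ℝ (i : ℤ)).eval (x k) *
          (Polynomial.Chebyshev.T ℝ (j : ℤ)).eval (x k) = 0) ∧
    (i = j → i = 0 →
      ∑ k ∈ Finset.range n,
        (Polynomial.Chebyshev.T ℝ (i : ℤ)).eval (x k) *
          (Polynomial.Chebyshev.T ℝ (j : ℤ)).eval (x k) = n) ∧
    (i = j → 1 ≤ i →
      ∑ k ∈ Finset.range n,
        (Polynomial.Chebyshev.T ℝ (i : ℤ)).eval (x k) *
          (Polynomial.Chebyshev.T ℝ (j : ℤ)).eval (x k) = n / 2) := by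
  have hi' : i < n := by omega
  have hj' : j < n := by omega
  set θ : ℕ → ℝ := fun k => (2 * k + 1) * π / (2 * n) with hθ
  have hT : ∀ (m : ℕ) (k : ℕ),
      (Polynomial.Chebyshev.T ℝ (m : ℤ)).eval (x k) = Real.cos ((m : ℝ) * θ k) := by
    intro m k
    rw [hx k]
    have := Polynomial.Chebyshev.T_real_cos (θ k) (m : ℤ)
    simpa [hθ] using this
  set d : ℕ := max i j - min i j with hdd
  have hprod : ∀ k : ℕ,
      (Polynomial.Chebyshev.T ℝ (i : ℤ)).eval (x k) *
        (Polynomial.Chebyshev.T ℝ (j : ℤ)).eval (x k)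
      = (Real.cos (((i + j : ℕ) : ℝ) * θ k) + Real.cos ((d : ℝ) * θ k)) / 2 := by
    intro k
    rw [hT i k, hT j k]
    have h1 : ((i + j : ℕ) : ℝ) * θ k = (i : ℝ) * θ k + (j : ℝ) * θ k := by
      push_cast; ring
    rw [h1, Real.cos_add]
    rcases le_total j i with h | h
    · have hd : (d : ℝ) = (i : ℝ) - j := by
        rw [hdd]; push_cast [max_eq_left h, min_eq_right h, Nat.cast_sub h]; ring
      rw [hd, sub_mul, Real.cos_sub]
      ring
    · have hd : (d : ℝ) = -((i : ℝ) - j) := by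
        rw [hdd]; push_cast [max_eq_right h, min_eq_left h, Nat.cast_sub h]; ring
      rw [hd, neg_mul, Real.cos_neg, sub_mul, Real.cos_sub]
      ring
  have hS : ∀ m : ℕ, m < 2 * n →
      ∑ k ∈ Finset.range n, Real.cos ((m : ℝ) * θ k) = if m = 0 then (n : ℝ) else 0 := by
    intro m hm
    rcases Nat.eq_zero_or_pos m with h0 | h1
    · subst h0; simp
    · rw [if_neg (by omega)]
      exact sum_cos_nodes n m hn h1 hm
  have hsum : ∑ k ∈ Finset.range n,
      (Polynomial.Chebyshev.T ℝ (i : ℤ)).eval (x k) *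
        (Polynomial.Chebyshev.T ℝ (j : ℤ)).eval (x k)
      = ((if i + j = 0 then (n : ℝ) else 0) + (if d = 0 then (n : ℝ) else 0)) / 2 := by
    rw [Finset.sum_congr rfl fun k _ => hprod k, ← Finset.sum_div,
      Finset.sum_add_distrib, hS (i + j) (by omega), hS d (by omega)]
  refine ⟨?_, ?_, ?_⟩
  · intro hne
    rw [hsum, if_neg (by omega), if_neg (by omega)]
    norm_num
  · intro hij h0
    rw [hsum, if_pos (by omega), if_pos (by omega)]
    ring
  · intro hij h1
    rw [hsum, if_neg (by omega), if_pos (by omega)]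
    ring
end

section
/- Let J be a positive integer, and for j = 0, …, J−1 define the Fejér nodes x_j = cos((2j+1)π/(2J)) and the Fejér weights w_j = (2/J)·[1 − 2·∑_{ℓ=1}^{⌊J/2⌋} cos(ℓπ(2j+1)/J)/(4ℓ² − 1)]. Then Fejér's first quadrature rule is exact for all polynomials of degree at most J − 1: for every real polynomial p with deg p ≤ J − 1, ∑_{j=0}^{J−1} w_j·p(x_j) = ∫_{−1}^{1} p(x) dx. -/
open Real Finset Polynomial Polynomial.Chebyshev


lemma cos_sum_zero (J : ℕ) (hJ : 0 < J) (m : ℤ) (hm0 : m ≠ 0) (hm : m.natAbs < 2 * J) :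
    ∑ j ∈ Finset.range J, Real.cos ((m : ℝ) * (2 * j + 1) * π / (2 * J)) = 0 := by
  have hJ' : (2 * (J:ℝ)) ≠ 0 := by positivity
  have hs : Real.sin ((m : ℝ) * π / (2 * J)) ≠ 0 := by
    rw [ne_eq, Real.sin_eq_zero_iff]
    rintro ⟨n, hn⟩
    have hn' : (n : ℝ) * (2 * (J:ℝ)) * π = (m : ℝ) * π := by
      field_simp at hn; rw [← hn]; ring
    have : (n : ℝ) * (2 * (J:ℝ)) = (m : ℝ) := mul_right_cancel₀ Real.pi_ne_zero hn'
    have hnm : n * (2 * (J:ℤ)) = m := by exact_mod_cast this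
    rcases lt_trichotomy n 0 with h | h | h
    · have h1 : m ≤ -(2 * (J:ℤ)) := by nlinarith
      omega
    · subst h; simp at hnm; omega
    · have h1 : (2 * (J:ℤ)) ≤ m := by nlinarith
      omega
  set f : ℕ → ℝ := fun j => Real.sin ((m : ℝ) * (2 * j) * π / (2 * J)) with hf
  have key : ∀ j : ℕ, 2 * Real.cos ((m : ℝ) * (2 * j + 1) * π / (2 * J)) *
      Real.sin ((m : ℝ) * π / (2 * J)) = f (j + 1) - f j := by
    intro j
    simp only [hf]
    push_cast
    have h1 : (m : ℝ) * (2 * ((j:ℝ)+1)) * π / (2 * J) =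
        (m : ℝ) * (2 * j + 1) * π / (2 * J) + (m : ℝ) * π / (2 * J) := by ring
    have h2 : (m : ℝ) * (2 * (j:ℝ)) * π / (2 * J) =
        (m : ℝ) * (2 * j + 1) * π / (2 * J) - (m : ℝ) * π / (2 * J) := by ring
    rw [h1, h2, Real.sin_add, Real.sin_sub]; ring
  have tel : ∑ j ∈ Finset.range J, 2 * Real.cos ((m : ℝ) * (2 * j + 1) * π / (2 * J)) *
      Real.sin ((m : ℝ) * π / (2 * J)) = f J - f 0 := by
    rw [Finset.sum_congr rfl fun j _ => key j]
    exact Finset.sum_range_sub f J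
  have hfJ : f J = 0 := by
    have : (m : ℝ) * (2 * J) * π / (2 * J) = (m : ℝ) * π := by field_simp
    simp only [hf, this, Real.sin_int_mul_pi]
  have hf0 : f 0 = 0 := by simp [hf]
  rw [hfJ, hf0, sub_zero] at tel
  have : (∑ j ∈ Finset.range J, Real.cos ((m : ℝ) * (2 * j + 1) * π / (2 * J))) *
      (2 * Real.sin ((m : ℝ) * π / (2 * J))) = 0 := by
    rw [← tel, Finset.sum_mul]; apply Finset.sum_congr rfl; intro j _; ring
  rcases mul_eq_zero.mp this with h | h
  · exact h
  · rcases mul_eq_zero.mp h with h | h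
    · norm_num at h
    · exact absurd h hs


lemma prod_sum (J : ℕ) (hJ : 0 < J) (l k : ℕ) (hl1 : 1 ≤ l) (hl2 : l ≤ J / 2) (hk : k ≤ J - 1) :
    ∑ j ∈ Finset.range J, Real.cos ((l : ℝ) * π * (2 * j + 1) / J) *
      Real.cos ((k : ℝ) * (2 * j + 1) * π / (2 * J)) =
    if 2 * l = k then (J : ℝ) / 2 else 0 := by
  have hJ' : (J : ℝ) ≠ 0 := Nat.cast_ne_zero.mpr hJ.ne'
  have key : ∀ j : ℕ, Real.cos ((l : ℝ) * π * (2 * j + 1) / J) *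
      Real.cos ((k : ℝ) * (2 * j + 1) * π / (2 * J)) =
      (Real.cos ((((2 * l + k : ℕ) : ℤ) : ℝ) * (2 * j + 1) * π / (2 * J)) +
       Real.cos ((((2 * l : ℤ) - k) : ℝ) * (2 * j + 1) * π / (2 * J))) / 2 := by
    intro j
    have ha : (l : ℝ) * π * (2 * j + 1) / J = (2 * l : ℝ) * (2 * j + 1) * π / (2 * J) := by
      field_simp
    set b := (k : ℝ) * (2 * j + 1) * π / (2 * J)
    set a := (2 * l : ℝ) * (2 * j + 1) * π / (2 * J)
    rw [ha]
    have h1 : (((2 * l + k : ℕ) : ℤ) : ℝ) * (2 * j + 1) * π / (2 * J) = a + b := by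
      push_cast; simp only [a, b]; ring
    have h2 : ((((2 * l : ℤ)) - k) : ℝ) * (2 * j + 1) * π / (2 * J) = a - b := by
      push_cast; simp only [a, b]; ring
    rw [h1, h2, Real.cos_add, Real.cos_sub]; ring
  rw [Finset.sum_congr rfl fun j _ => key j, ← Finset.sum_div, Finset.sum_add_distrib]
  have hsum1 : ∑ j ∈ Finset.range J,
      Real.cos ((((2 * l + k : ℕ) : ℤ) : ℝ) * (2 * j + 1) * π / (2 * J)) = 0 := by
    have hk' : k < J := by omega
    have hl' : 2 * l ≤ J := by omega
    apply cos_sum_zero J hJ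
    · omega
    · omega
  rw [hsum1, zero_add]
  by_cases h : 2 * l = k
  · have hz : ((2 * l : ℤ) - k : ℝ) = 0 := by
      have hk2 : (k : ℝ) = 2 * l := by exact_mod_cast h.symm
      push_cast
      rw [hk2]; ring
    simp only [hz, zero_mul, zero_div, Real.cos_zero, Finset.sum_const, Finset.card_range,
      nsmul_eq_mul, mul_one, if_pos h]
  · have hsum2 : ∑ j ∈ Finset.range J,
        Real.cos ((((2 * l : ℤ) - k) : ℝ) * (2 * j + 1) * π / (2 * J)) = 0 := by
      have := cos_sum_zero J hJ ((2 * l : ℤ) - k)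
        (by have hk' : k < J := by omega
            have hl' : 2 * l ≤ J := by omega
            omega)
        (by have hk' : k < J := by omega
            have hl' : 2 * l ≤ J := by omega
            omega)
      convert this using 2 with j
      push_cast; ring_nf
    rw [hsum2, if_neg h]
    simp


noncomputable def IVal (k : ℕ) : ℝ :=
  if k = 0 then 2 else if Even k then 2 / (1 - (k : ℝ) ^ 2) else 0

lemma U_sub_U (n : ℤ) : U ℝ n - U ℝ (n - 2) = 2 * T ℝ n := by
  rw [U_sub_two, T_eq_U_sub_X_mul_U]; ring

lemma T_eval_one (n : ℤ) : (T ℝ n).eval 1 = 1 := by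
  have := T_real_cos 0 n
  simpa using this

lemma T_eval_neg_one (n : ℤ) : (T ℝ n).eval (-1) = (-1 : ℝ) ^ n := by
  have h := T_real_cos π n
  rw [Real.cos_pi] at h
  rw [h]
  have h2 := Real.cos_add_int_mul_pi 0 n
  simpa using h2

lemma int_T (k : ℕ) : (∫ t in (-1 : ℝ)..1, (T ℝ (k : ℤ)).eval t) = IVal k := by
  match k with
  | 0 => simp [IVal, T_zero]; norm_num
  | 1 => simp [IVal, T_one]
  | (k + 2) =>
    set n : ℤ := (k : ℤ) + 2 with hn
    have hcast : ((k + 2 : ℕ) : ℤ) = n := by push_cast [hn]; ring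
    rw [hcast]
    have hn1 : ((n : ℝ) + 1) ≠ 0 := by push_cast [hn]; positivity
    have hn2 : ((n : ℝ) - 1) ≠ 0 := by
      push_cast [hn]
      have : (0:ℝ) ≤ (k:ℝ) := Nat.cast_nonneg k
      intro hc; nlinarith
    set a : ℝ := (2 * ((n : ℝ) + 1))⁻¹ with hadef
    set b : ℝ := (2 * ((n : ℝ) - 1))⁻¹ with hbdef
    set q : ℝ[X] := C a * T ℝ (n + 1) - C b * T ℝ (n - 1) with hq
    have hderiv : derivative q = T ℝ n := by
      rw [hq, derivative_sub, derivative_C_mul, derivative_C_mul,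
        T_derivative_eq_U, T_derivative_eq_U]
      have e1 : (n + 1 - 1 : ℤ) = n := by ring
      have e2 : (n - 1 - 1 : ℤ) = n - 2 := by ring
      rw [e1, e2]
      have h1 : ((n + 1 : ℤ) : ℝ[X]) = C ((n : ℝ) + 1) := by
        rw [← C_eq_intCast]; push_cast; ring
      have h2 : ((n - 1 : ℤ) : ℝ[X]) = C ((n : ℝ) - 1) := by
        rw [← C_eq_intCast]; push_cast; ring
      rw [h1, h2, ← mul_assoc, ← mul_assoc, ← Polynomial.C_mul, ← Polynomial.C_mul]
      have ha : a * ((n : ℝ) + 1) = 1 / 2 := by rw [hadef]; field_simp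
      have hb : b * ((n : ℝ) - 1) = 1 / 2 := by rw [hbdef]; field_simp
      rw [ha, hb, ← mul_sub, U_sub_U n]
      have h2' : (2 : ℝ[X]) = C 2 := (map_ofNat Polynomial.C 2).symm
      rw [h2', ← mul_assoc, ← Polynomial.C_mul]
      norm_num
    have hint : (∫ t in (-1 : ℝ)..1, (T ℝ n).eval t) = q.eval 1 - q.eval (-1) := by
      apply intervalIntegral.integral_deriv_eq_sub' (fun t => q.eval t)
      · funext t; rw [Polynomial.deriv, hderiv]
      · intro t _; exact (q.differentiable).differentiableAt
      · exact ((T ℝ n).continuous_aeval).continuousOn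
    rw [hint]
    have he1 : q.eval 1 = a - b := by
      simp [hq, _root_.T_eval_one]
    have he2 : q.eval (-1) = (-1 : ℝ) ^ (k + 1) * (a - b) := by
      have hn1' : n + 1 = ((k + 3 : ℕ) : ℤ) := by push_cast [hn]; ring
      have hn2' : n - 1 = ((k + 1 : ℕ) : ℤ) := by push_cast [hn]; ring
      have p1 : ((-1 : ℝ) ^ (n + 1)) = (-1 : ℝ) ^ (k + 3) := by
        rw [hn1', zpow_natCast]
      have p2 : ((-1 : ℝ) ^ (n - 1)) = (-1 : ℝ) ^ (k + 1) := by
        rw [hn2', zpow_natCast]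
      have p3 : (-1 : ℝ) ^ (k + 3) = (-1 : ℝ) ^ (k + 1) := by
        rw [pow_add, pow_add]; norm_num
      simp only [hq, eval_sub, eval_mul, eval_C, _root_.T_eval_neg_one, p1, p2, p3]
      ring
    rw [he1, he2]
    have hn3 : ((n : ℝ) ^ 2 - 1) ≠ 0 := by
      have hmul := mul_ne_zero hn1 hn2
      intro hc; apply hmul; nlinarith
    have hab : a - b = -1 / (((n:ℝ))^2 - 1) := by
      rw [hadef, hbdef, eq_div_iff hn3]
      have h1 : (2 * ((n:ℝ) + 1)) ≠ 0 := by intro hc; apply hn1; nlinarith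
      have h2 : (2 * ((n:ℝ) - 1)) ≠ 0 := by intro hc; apply hn2; nlinarith
      field_simp
      ring
    rcases Nat.even_or_odd k with hke | hko
    · have hpow : (-1 : ℝ) ^ (k + 1) = -1 := by
        rw [pow_succ, hke.neg_one_pow]; norm_num
      rw [hpow, hab]
      have hev : Even (k + 2) := by rcases hke with ⟨m, hm⟩; exact ⟨m + 1, by omega⟩
      simp only [IVal, if_neg (by omega : ¬(k + 2 = 0)), if_pos hev]
      have hd : (1 - ((k + 2 : ℕ) : ℝ) ^ 2) ≠ 0 := by
        intro hc; apply hn3; push_cast [hn] at hc ⊢; nlinarith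
      have hstep : (-1:ℝ)/((n:ℝ)^2-1) - -1 * (-1/((n:ℝ)^2-1)) = -2/((n:ℝ)^2-1) := by ring
      rw [hstep, div_eq_div_iff hn3 hd]
      push_cast [hn]
      ring
    · have hpow : (-1 : ℝ) ^ (k + 1) = 1 := by
        rw [pow_succ, hko.neg_one_pow]; norm_num
      rw [hpow, hab]
      have hnev : ¬ Even (k + 2) := by
        rcases hko with ⟨m, hm⟩; rintro ⟨c, hc⟩; omega
      simp only [IVal, if_neg (by omega : ¬(k + 2 = 0)), if_neg hnev]
      ring



lemma quad_T (J : ℕ) (hJ : 0 < J) (k : ℕ) (hk : k ≤ J - 1) :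
    ∑ j ∈ Finset.range J, ((2 / (J : ℝ)) * (1 - 2 * ∑ l ∈ Finset.Icc 1 (J / 2),
        Real.cos ((l : ℝ) * π * (2 * j + 1) / J) / (4 * (l : ℝ) ^ 2 - 1))) *
      Real.cos ((k : ℝ) * (2 * j + 1) * π / (2 * J)) = IVal k := by
  have hJ' : (J : ℝ) ≠ 0 := Nat.cast_ne_zero.mpr hJ.ne'
  set c : ℕ → ℝ := fun j => Real.cos ((k : ℝ) * (2 * j + 1) * π / (2 * J)) with hc
  set g : ℕ → ℕ → ℝ := fun l j => Real.cos ((l : ℝ) * π * (2 * j + 1) / J) with hg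
  set d : ℕ → ℝ := fun l => 4 * (l : ℝ) ^ 2 - 1 with hd
  have step1 : ∑ j ∈ Finset.range J, ((2 / (J : ℝ)) * (1 - 2 * ∑ l ∈ Finset.Icc 1 (J / 2),
        g l j / d l)) * c j
      = (2 / (J : ℝ)) * (∑ j ∈ Finset.range J, c j)
        - (4 / (J : ℝ)) * ∑ l ∈ Finset.Icc 1 (J / 2),
            (∑ j ∈ Finset.range J, g l j * c j) / d l := by
    have e : ∀ j ∈ Finset.range J, ((2 / (J : ℝ)) * (1 - 2 * ∑ l ∈ Finset.Icc 1 (J / 2),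
        g l j / d l)) * c j
        = ((2 / (J : ℝ)) * c j - (4 / (J : ℝ)) * ∑ l ∈ Finset.Icc 1 (J / 2),
            (g l j * c j) / d l) := by
      intro j _
      have h1 : (∑ l ∈ Finset.Icc 1 (J / 2), g l j / d l) * c j
          = ∑ l ∈ Finset.Icc 1 (J / 2), (g l j * c j) / d l := by
        rw [Finset.sum_mul]
        exact Finset.sum_congr rfl fun l _ => by ring
      calc ((2 / (J : ℝ)) * (1 - 2 * ∑ l ∈ Finset.Icc 1 (J / 2), g l j / d l)) * c j
          = (2 / (J : ℝ)) * c j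
            - (4 / (J : ℝ)) * ((∑ l ∈ Finset.Icc 1 (J / 2), g l j / d l) * c j) := by ring
        _ = _ := by rw [h1]
    rw [Finset.sum_congr rfl e, Finset.sum_sub_distrib, ← Finset.mul_sum, ← Finset.mul_sum,
      Finset.sum_comm]
    congr 1
    congr 1
    exact Finset.sum_congr rfl fun l _ => (Finset.sum_div _ _ _).symm
  rw [step1]
  have hprod : ∀ l ∈ Finset.Icc 1 (J / 2),
      (∑ j ∈ Finset.range J, g l j * c j) / d l = (if 2 * l = k then (J : ℝ) / 2 else 0) / d l := by
    intro l hl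
    rw [Finset.mem_Icc] at hl
    rw [prod_sum J hJ l k hl.1 hl.2 hk]
  rw [Finset.sum_congr rfl hprod]
  by_cases hk0 : k = 0
  · subst hk0
    have hcj : ∀ j ∈ Finset.range J, c j = 1 := by
      intro j _; simp [hc]
    rw [Finset.sum_congr rfl hcj, Finset.sum_const, Finset.card_range, nsmul_eq_mul, mul_one]
    have hz : ∀ l ∈ Finset.Icc 1 (J / 2),
        (if 2 * l = 0 then (J : ℝ) / 2 else 0) / d l = 0 := by
      intro l hl
      rw [Finset.mem_Icc] at hl
      rw [if_neg (by omega)]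
      simp
    rw [Finset.sum_congr rfl hz, Finset.sum_const, smul_zero]
    rw [IVal, if_pos rfl]
    field_simp
    ring
  · have hc0 : ∑ j ∈ Finset.range J, c j = 0 := by
      have := cos_sum_zero J hJ (k : ℤ) (by exact_mod_cast hk0) (by omega)
      rw [← this]
      exact Finset.sum_congr rfl fun j _ => by push_cast; rfl
    rw [hc0, mul_zero, zero_sub]
    rcases Nat.even_or_odd k with hke | hko
    · obtain ⟨m, hm⟩ := hke
      have hm1 : 1 ≤ m := by omega
      have hm2 : m ≤ J / 2 := by omega
      have hsingle : ∑ l ∈ Finset.Icc 1 (J / 2),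
          (if 2 * l = k then (J : ℝ) / 2 else 0) / d l = ((J : ℝ) / 2) / d m := by
        rw [Finset.sum_eq_single_of_mem m (Finset.mem_Icc.mpr ⟨hm1, hm2⟩)]
        · rw [if_pos (by omega)]
        · intro l hl hlm
          rw [if_neg (by omega), zero_div]
      rw [hsingle, IVal, if_neg hk0, if_pos ⟨m, hm⟩]
      have hdm : d m ≠ 0 := by
        show (4 * (m:ℝ) ^ 2 - 1) ≠ 0
        have : (1:ℝ) ≤ (m:ℝ) := by exact_mod_cast hm1
        intro hcon; nlinarith
      have hk2 : (1 - (k:ℝ)^2) ≠ 0 := by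
        have : (k:ℝ) = 2 * m := by exact_mod_cast hm ▸ (by push_cast; ring : ((m + m : ℕ):ℝ) = 2 * m)
        rw [this]
        have : (1:ℝ) ≤ (m:ℝ) := by exact_mod_cast hm1
        intro hcon; nlinarith
      have hkm : (k : ℝ) = 2 * m := by
        rw [hm]; push_cast; ring
      have hstep : -(4 / (J:ℝ) * ((J:ℝ) / 2 / d m)) = -2 / d m := by
        rw [div_div]
        field_simp
        ring
      rw [hstep, div_eq_div_iff hdm hk2]
      show (-2:ℝ) * (1 - (k:ℝ)^2) = 2 * (4 * (m:ℝ)^2 - 1)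
      rw [hkm]; ring
    · have hz : ∀ l ∈ Finset.Icc 1 (J / 2),
          (if 2 * l = k then (J : ℝ) / 2 else 0) / d l = 0 := by
        intro l hl
        rw [if_neg (by rcases hko with ⟨m, hm⟩; omega), zero_div]
      rw [Finset.sum_congr rfl hz, Finset.sum_const, smul_zero, mul_zero, neg_zero,
        IVal, if_neg hk0, if_neg (by rcases hko with ⟨m, hm⟩; rintro ⟨c, hc⟩; omega)]


lemma T_coeff (n : ℕ) : (T ℝ (n:ℤ)).natDegree ≤ n ∧ (T ℝ (n:ℤ)).coeff n = 2 ^ (n-1) := by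
  induction n using Nat.strong_induction_on with
  | _ n ih =>
    match n with
    | 0 => simp [T_zero]
    | 1 => simp [T_one]
    | (n + 2) =>
      have hc : ((n + 2 : ℕ) : ℤ) = (n : ℤ) + 2 := by push_cast; ring
      have hrec : T ℝ ((n + 2 : ℕ) : ℤ) = 2 * X * T ℝ ((n+1 : ℕ) : ℤ) - T ℝ (n : ℤ) := by
        rw [hc, T_add_two]
        norm_cast
      obtain ⟨hd1, hc1⟩ := ih (n+1) (by omega)
      obtain ⟨hd0, hc0⟩ := ih n (by omega)
      constructor
      · rw [hrec]
        refine le_trans (natDegree_sub_le _ _) ?_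
        refine max_le ?_ (by omega)
        refine le_trans (natDegree_mul_le) ?_
        have : (2 * X : ℝ[X]).natDegree ≤ 1 := by
          refine le_trans (natDegree_mul_le) ?_
          simp
        omega
      · rw [hrec, coeff_sub, coeff_eq_zero_of_natDegree_lt (by omega : (T ℝ (n:ℤ)).natDegree < n + 2)]
        have h2 : (2 * X * T ℝ ((n+1 : ℕ):ℤ)) = C 2 * (X * T ℝ ((n+1 : ℕ):ℤ)) := by
          rw [← mul_assoc]
          congr 1
        rw [h2, coeff_C_mul, coeff_X_mul, hc1]
        norm_num
        ring

lemma pow_mem_span (N : ℕ) : ∀ d : ℕ, d ≤ N →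
    (X : ℝ[X]) ^ d ∈ Submodule.span ℝ ((fun k : ℕ => T ℝ (k:ℤ)) '' (Set.Iic N)) := by
  intro d
  induction d using Nat.strong_induction_on with
  | _ d ih =>
    intro hd
    set S := Submodule.span ℝ ((fun k : ℕ => T ℝ (k:ℤ)) '' (Set.Iic N)) with hS
    have hTmem : T ℝ (d:ℤ) ∈ S :=
      Submodule.subset_span ⟨d, hd, rfl⟩
    match d, hd, ih with
    | 0, hd, ih => simpa [T_zero] using hTmem
    | (d+1), hd, ih =>
      obtain ⟨hdeg, hcoef⟩ := T_coeff (d+1)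
      set r : ℝ[X] := T ℝ ((d+1 : ℕ):ℤ) - C (2 ^ d : ℝ) * X ^ (d+1) with hr
      have hrdeg : r.natDegree < d + 1 := by
        have : r.natDegree ≤ d := by
          rw [natDegree_le_iff_coeff_eq_zero]
          intro m hm
          rw [hr, coeff_sub, coeff_C_mul, coeff_X_pow]
          rcases eq_or_ne m (d+1) with h | h
          · subst h
            rw [if_pos rfl, hcoef]
            simp
          · rw [if_neg h, mul_zero, sub_zero]
            exact coeff_eq_zero_of_natDegree_lt (by omega)
        omega
      have hrsum := Polynomial.as_sum_range' r (d+1) hrdeg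
      have hrmem : r ∈ S := by
        rw [hrsum]
        apply Submodule.sum_mem
        intro i hi
        rw [Finset.mem_range] at hi
        have hXi : (X : ℝ[X]) ^ i ∈ S := ih i (by omega) (by omega)
        have : (monomial i) (r.coeff i) = (r.coeff i) • (X : ℝ[X]) ^ i := by
          rw [smul_eq_C_mul, C_mul_X_pow_eq_monomial]
        rw [this]
        exact Submodule.smul_mem _ _ hXi
      have hX : (X : ℝ[X]) ^ (d+1) = ((2:ℝ) ^ d)⁻¹ • (T ℝ ((d+1 : ℕ):ℤ) - r) := by
        rw [hr]
        have h2 : ((2:ℝ)^d) ≠ 0 := by positivity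
        rw [smul_eq_C_mul]
        simp only [sub_sub_cancel]
        rw [← mul_assoc, ← Polynomial.C_mul, inv_mul_cancel₀ h2, Polynomial.C_1, one_mul]
      rw [hX]
      exact Submodule.smul_mem _ _ (Submodule.sub_mem _ hTmem hrmem)

lemma poly_mem_span (N : ℕ) (p : ℝ[X]) (hp : p.natDegree ≤ N) :
    p ∈ Submodule.span ℝ ((fun k : ℕ => T ℝ (k:ℤ)) '' (Set.Iic N)) := by
  have := Polynomial.as_sum_range' p (N+1) (by omega)
  rw [this]
  apply Submodule.sum_mem
  intro i hi
  rw [Finset.mem_range] at hi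
  have : (monomial i) (p.coeff i) = (p.coeff i) • (X : ℝ[X]) ^ i := by
    rw [smul_eq_C_mul, C_mul_X_pow_eq_monomial]
  rw [this]
  exact Submodule.smul_mem _ _ (pow_mem_span N i (by omega))



theorem fejer_first_rule_exactness
    (J : ℕ) (hJ : 0 < J) (x w : ℕ → ℝ)
    (hx : ∀ j : ℕ, x j = Real.cos ((2 * j + 1) * π / (2 * J)))
    (hw : ∀ j : ℕ, w j = (2 / (J : ℝ)) *
      (1 - 2 * ∑ l ∈ Finset.Icc 1 (J / 2),
        Real.cos ((l : ℝ) * π * (2 * j + 1) / J) / (4 * (l : ℝ) ^ 2 - 1))) :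
    ∀ p : Polynomial ℝ, p.natDegree ≤ J - 1 →
      ∑ j ∈ Finset.range J, w j * p.eval (x j) = ∫ t in (-1 : ℝ)..1, p.eval t := by
  intro p hp
  have hspan := poly_mem_span (J-1) p hp
  clear hp
  induction hspan using Submodule.span_induction with
  | mem q hq =>
    obtain ⟨k, hk, rfl⟩ := hq
    rw [int_T k]
    rw [← quad_T J hJ k hk]
    apply Finset.sum_congr rfl
    intro j _
    rw [hw j, hx j]
    congr 1
    rw [T_real_cos]
    congr 1
    push_cast
    ring
  | zero => simp
  | add q r hq hr ihq ihr =>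
    simp only [eval_add]
    rw [Finset.sum_congr rfl (fun j _ => mul_add (w j) (q.eval (x j)) (r.eval (x j))),
      Finset.sum_add_distrib, ihq, ihr]
    exact (intervalIntegral.integral_add ((q.continuous).intervalIntegrable _ _)
      ((r.continuous).intervalIntegrable _ _)).symm
  | smul a q hq ihq =>
    simp only [eval_smul, smul_eq_mul]
    rw [Finset.sum_congr rfl (fun j _ => by rw [← mul_assoc, mul_comm (w j) a, mul_assoc]),
      ← Finset.mul_sum, ihq, ← intervalIntegral.integral_const_mul]
end
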